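/- arXiv:1701.08044 — 5 statements merged into one kernel-verified Lean document; each statement's English description precedes it below -/
import Mathlib

section
/- The number of inversions and the major index are equidistributed over S_n; that is, for every n ≥ 1, the sum of q^{inv(π)} over all permutations π of {1,...,n} equals the sum of q^{maj(π)}, and both equal the q-factorial [n]_q!. -/
namespace BS

/-- `l` is (the one-line notation of) a permutation of `{1,...,n}`. -/
def isPerm (l : List ℕ) (n : ℕ) : Prop := l.Perm ((List.range n).map (· + 1))

/-- number of inversions -/
def inv (l : List ℕ) : ℕ :=
  ((Finset.range l.length ×ˢ Finset.range l.length).filter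
    (fun p => p.1 < p.2 ∧ l.getD p.2 0 < l.getD p.1 0)).card

/-- the set of (0-indexed) descent positions -/
def desSet (l : List ℕ) : Finset ℕ :=
  (Finset.range (l.length - 1)).filter (fun i => l.getD (i + 1) 0 < l.getD i 0)

def des (l : List ℕ) : ℕ := (desSet l).card

/-- major index: sum of the (1-indexed) descent positions -/
def maj (l : List ℕ) : ℕ := ∑ i ∈ desSet l, (i + 1)

/-- number of occurrences of the generalized pattern ac-b (132, first two letters adjacent) -/
def acb (l : List ℕ) : ℕ :=
  ((Finset.range l.length ×ˢ Finset.range l.length).filter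
    (fun p => p.1 + 2 ≤ p.2 ∧ l.getD p.1 0 < l.getD p.2 0 ∧ l.getD p.2 0 < l.getD (p.1 + 1) 0)).card

/-- number of occurrences of the generalized pattern ba-c (213, first two letters adjacent) -/
def bac (l : List ℕ) : ℕ :=
  ((Finset.range l.length ×ˢ Finset.range l.length).filter
    (fun p => p.1 + 2 ≤ p.2 ∧ l.getD (p.1 + 1) 0 < l.getD p.1 0 ∧ l.getD p.1 0 < l.getD p.2 0)).card

/-- number of occurrences of the generalized pattern cb-a (321, first two letters adjacent) -/
def cba (l : List ℕ) : ℕ :=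
  ((Finset.range l.length ×ˢ Finset.range l.length).filter
    (fun p => p.1 + 2 ≤ p.2 ∧ l.getD p.2 0 < l.getD (p.1 + 1) 0 ∧ l.getD (p.1 + 1) 0 < l.getD p.1 0)).card

/-- Babson–Steingrímsson's statistic stat = (ac-b)+(ba-c)+(cb-a)+(ba) -/
def stat (l : List ℕ) : ℕ := acb l + bac l + cba l + des l

/-- first letter -/
def F (l : List ℕ) : ℕ := l.headD 0

/-- insertion space `j` (i.e. between letters `j-1` and `j`, 0-indexed) is a descent space -/
def isDescSpace (σ : List ℕ) (j : ℕ) : Prop :=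
  1 ≤ j ∧ j < σ.length ∧ σ.getD j 0 < σ.getD (j - 1) 0

instance (σ : List ℕ) (j : ℕ) : Decidable (isDescSpace σ j) := by
  unfold isDescSpace; infer_instance

def isAscSpace (σ : List ℕ) (j : ℕ) : Prop :=
  1 ≤ j ∧ j < σ.length ∧ σ.getD (j - 1) 0 < σ.getD j 0

instance (σ : List ℕ) (j : ℕ) : Decidable (isAscSpace σ j) := by
  unfold isAscSpace; infer_instance

/-- maj-labeling of the insertion spaces `0,...,σ.length`: the final space gets `0`,
descent spaces get `1,...,des σ` from right to left, the remaining spaces get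
`des σ + 1, ...` from left to right. -/
def majLabel (σ : List ℕ) (j : ℕ) : ℕ :=
  if j = σ.length then 0
  else if isDescSpace σ j then
    1 + ((Finset.Ico (j + 1) σ.length).filter (fun t => isDescSpace σ t)).card
  else des σ + 1 + ((Finset.range j).filter (fun t => ¬ isDescSpace σ t)).card

/-- stat-labeling of the insertion spaces: descent spaces and the final space get
`0,...,des σ` from left to right, the initial space gets `des σ + 1`, and ascent
spaces get `des σ + 2, ...` from right to left. -/
def statLabel (σ : List ℕ) (j : ℕ) : ℕ :=
  if j = σ.length then des σ
  else if isDescSpace σ j then ((Finset.range j).filter (fun t => isDescSpace σ t)).card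
  else if j = 0 then des σ + 1
  else des σ + 1 + ((Finset.Ico j σ.length).filter (fun t => isAscSpace σ t)).card

/-- index of the insertion space carrying label `i` in the labeling `lab` -/
def spaceOfLabel (lab : List ℕ → ℕ → ℕ) (σ : List ℕ) (i : ℕ) : ℕ :=
  ((List.range (σ.length + 1)).find? (fun j => decide (lab σ j = i))).getD 0

/-- insert `v` at the space with inv-label `i` (spaces labeled from right to left) -/
def insertAtInvLabel (i : ℕ) (σ : List ℕ) (v : ℕ) : List ℕ :=
  σ.insertIdx (σ.length - i) v

def insertAtMajLabel (i : ℕ) (σ : List ℕ) (v : ℕ) : List ℕ :=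
  σ.insertIdx (spaceOfLabel majLabel σ i) v

def insertAtStatLabel (i : ℕ) (σ : List ℕ) (v : ℕ) : List ℕ :=
  σ.insertIdx (spaceOfLabel statLabel σ i) v

/-- inversion table: `c_i` is the inv-label of the space of `π⁽ⁱ⁻¹⁾` that letter `i` occupies -/
def invTable (π : List ℕ) : List ℕ :=
  (List.range π.length).map (fun k =>
    if k = 0 then 0
    else (π.filter (· ≤ k)).length - (π.filter (· ≤ k + 1)).idxOf (k + 1))

/-- major index table -/
def majTable (π : List ℕ) : List ℕ :=
  (List.range π.length).map (fun k =>
    if k = 0 then 0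
    else majLabel (π.filter (· ≤ k)) ((π.filter (· ≤ k + 1)).idxOf (k + 1)))

/-- stat table -/
def statTable (π : List ℕ) : List ℕ :=
  (List.range π.length).map (fun k =>
    if k = 0 then 0
    else statLabel (π.filter (· ≤ k)) ((π.filter (· ≤ k + 1)).idxOf (k + 1)))

/-- `w ∈ E_n`, i.e. `w = w₁⋯wₙ` with `0 ≤ wᵢ ≤ i - 1` -/
def memE (w : List ℕ) (n : ℕ) : Prop :=
  w.length = n ∧ ∀ k < n, w.getD k 0 ≤ k

/-- the map ρ : complement-reverse `π⁽ᵏ⁾` (k the first letter) behind its first letter,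
then reinsert `k+1,…,n` at the maj-labels given by the stat table of `π`. -/
def rho (π : List ℕ) : List ℕ :=
  let n := π.length
  let k := π.headD 0
  let s := statTable π
  (List.range (n - k)).foldl
    (fun σ m => insertAtMajLabel (s.getD (k + m) 0) σ (k + m + 1))
    (k :: (((π.filter (· ≤ k)).tail.map (fun x => k - x)).reverse))

/-- the finset of one-line notations of permutations of `{1,…,n}` -/
def perms (n : ℕ) : Finset (List ℕ) :=
  (((List.range n).map (· + 1)).permutations).toFinset

/-- the q-factorial `[n]_q!` -/
def qFact {R : Type*} [CommSemiring R] (q : R) (n : ℕ) : R :=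
  ∏ k ∈ Finset.range n, ∑ j ∈ Finset.range (k + 1), q ^ j

end BS
namespace BS

variable {σ l : List ℕ} {v p i n : ℕ}

lemma mem_perms {l : List ℕ} {n : ℕ} :
    l ∈ perms n ↔ l.Perm ((List.range n).map (· + 1)) := by
  simp [perms, List.mem_permutations]

lemma length_of_mem_perms {l : List ℕ} {n : ℕ} (h : l ∈ perms n) : l.length = n := by
  simpa using (mem_perms.1 h).length_eq

lemma lt_of_mem_of_mem_perms {l : List ℕ} {n x : ℕ} (h : l ∈ perms n) (hx : x ∈ l) :
    x < n + 1 := by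
  have := ((mem_perms.1 h).mem_iff).1 hx
  simp only [List.mem_map, List.mem_range] at this
  omega

lemma not_mem_of_mem_perms {l : List ℕ} {n : ℕ} (h : l ∈ perms n) : n + 1 ∉ l := by
  intro hc; exact absurd (lt_of_mem_of_mem_perms h hc) (by omega)

lemma range_succ_perm (n : ℕ) :
    ((List.range (n+1)).map (· + 1)).Perm ((n+1) :: (List.range n).map (· + 1)) := by
  rw [List.range_succ, List.map_append]
  simpa using (List.perm_append_singleton (n+1) ((List.range n).map (· + 1)))

lemma erase_mem_perms {π : List ℕ} {n : ℕ} (h : π ∈ perms (n+1)) :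
    π.erase (n+1) ∈ perms n := by
  rw [mem_perms]
  have h1 := (mem_perms.1 h).erase (n+1)
  refine h1.trans ?_
  have h2 := (range_succ_perm n).erase (n+1)
  refine h2.trans ?_
  rw [List.erase_cons_head]

lemma insertIdx_mem_perms {σ : List ℕ} {n p : ℕ} (h : σ ∈ perms n) (hp : p ≤ n) :
    σ.insertIdx p (n+1) ∈ perms (n+1) := by
  rw [mem_perms]
  have hl : p ≤ σ.length := by rw [length_of_mem_perms h]; exact hp
  refine (List.perm_insertIdx _ _ hl).trans ?_
  exact ((mem_perms.1 h).cons (n+1)).trans (range_succ_perm n).symm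

lemma insertIdx_indexOf_erase {v : ℕ} : ∀ {π : List ℕ}, v ∈ π →
    (π.erase v).insertIdx (π.idxOf v) v = π := by
  intro π
  induction π with
  | nil => simp
  | cons a t ih =>
    intro hv
    by_cases hav : a = v
    · subst hav; simp
    · have hvt : v ∈ t := by
        rcases List.mem_cons.1 hv with h | h
        · exact absurd h.symm hav
        · exact h
      rw [List.idxOf_cons_ne _ (by exact hav), List.erase_cons_tail (by simpa using hav)]
      simpa [List.insertIdx_succ_cons] using congrArg (a :: ·) (ih hvt)

lemma erase_insertIdx {v : ℕ} : ∀ {p : ℕ} {σ : List ℕ}, v ∉ σ → p ≤ σ.length →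
    (σ.insertIdx p v).erase v = σ := by
  intro p
  induction p with
  | zero => intro σ hv _; simp
  | succ p ih =>
    intro σ hv hp
    match σ with
    | [] => simp at hp
    | a :: t =>
      have hav : a ≠ v := fun h => hv (h ▸ List.mem_cons_self)
      rw [List.insertIdx_succ_cons, List.erase_cons_tail (by simpa using hav),
        ih (fun h => hv (List.mem_cons_of_mem _ h)) (by simpa using hp)]

lemma indexOf_insertIdx {v : ℕ} : ∀ {p : ℕ} {σ : List ℕ}, v ∉ σ → p ≤ σ.length →
    (σ.insertIdx p v).idxOf v = p := by
  intro p
  induction p with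
  | zero => intro σ _ _; simp
  | succ p ih =>
    intro σ hv hp
    match σ with
    | [] => simp at hp
    | a :: t =>
      have hav : a ≠ v := fun h => hv (h ▸ List.mem_cons_self)
      rw [List.insertIdx_succ_cons, List.idxOf_cons_ne _ hav,
        ih (fun h => hv (List.mem_cons_of_mem _ h)) (by simpa using hp)]

-- getD lemmas
lemma getD_insertIdx_lt {σ : List ℕ} {v p i : ℕ} (h : i < p) (hp : p ≤ σ.length) :
    (σ.insertIdx p v).getD i 0 = σ.getD i 0 := by
  have hi : i < σ.length := lt_of_lt_of_le h hp
  rw [List.getD_eq_getElem _ _ hi, List.getD_eq_getElem _ _ (by rw [List.length_insertIdx_of_le_length hp]; omega)]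
  exact List.getElem_insertIdx_of_lt h _

lemma getD_insertIdx_self {σ : List ℕ} {v p : ℕ} (hp : p ≤ σ.length) :
    (σ.insertIdx p v).getD p 0 = v := by
  rw [List.getD_eq_getElem _ _ (by rw [List.length_insertIdx_of_le_length hp]; omega)]
  exact List.getElem_insertIdx_self _

lemma getD_insertIdx_gt {σ : List ℕ} {v p i : ℕ} (h : p < i) (hi : i ≤ σ.length) :
    (σ.insertIdx p v).getD i 0 = σ.getD (i-1) 0 := by
  have hp : p ≤ σ.length := by omega
  rw [List.getD_eq_getElem _ _ (by rw [List.length_insertIdx_of_le_length hp]; omega),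
    List.getD_eq_getElem _ _ (show i - 1 < σ.length by omega)]
  have hk : p + (i - p - 1) < σ.length := by omega
  have := List.getElem_insertIdx_add_succ σ v p (i - p - 1) hk
  convert this using 2 <;> omega


def flabel (σ : List ℕ) (p : ℕ) : ℕ :=
  if p = σ.length then 0
  else if 1 ≤ p ∧ p - 1 ∈ desSet σ then 1 + ((desSet σ).filter (fun i => p ≤ i)).card
  else p + 1 + ((desSet σ).filter (fun i => p ≤ i)).card


lemma inv_insertIdx (hp : p ≤ σ.length) (hv : ∀ x ∈ σ, x < v) :
    inv (σ.insertIdx p v) = inv σ + (σ.length - p) := by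
  set n := σ.length with hn
  have hlt : ∀ i, i < n → σ.getD i 0 < v := fun i hi => by
    rw [List.getD_eq_getElem _ _ hi]; exact hv _ (List.getElem_mem hi)
  have hlen : (σ.insertIdx p v).length = n + 1 := List.length_insertIdx_of_le_length hp _
  set l' := σ.insertIdx p v with hl'
  have hg1 : ∀ i, i < p → l'.getD i 0 = σ.getD i 0 := fun i h => getD_insertIdx_lt h hp
  have hg2 : l'.getD p 0 = v := getD_insertIdx_self hp
  have hg3 : ∀ i, p < i → i ≤ n → l'.getD i 0 = σ.getD (i-1) 0 :=
    fun i h h' => getD_insertIdx_gt h h'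
  let e : ℕ → ℕ := fun i => if i < p then i else i + 1
  have he : ∀ i, e i = if i < p then i else i + 1 := fun _ => rfl
  have hE : ∀ i, i < n → l'.getD (e i) 0 = σ.getD i 0 := by
    intro i hi
    by_cases h : i < p
    · simp only [he, if_pos h]; exact hg1 i h
    · simp only [he, if_neg h]
      rw [hg3 (i+1) (by omega) (by omega)]
      simp
  have key : (Finset.range l'.length ×ˢ Finset.range l'.length).filter
      (fun q => q.1 < q.2 ∧ l'.getD q.2 0 < l'.getD q.1 0)
      = ((Finset.range n ×ˢ Finset.range n).filter
          (fun q => q.1 < q.2 ∧ σ.getD q.2 0 < σ.getD q.1 0)).image (fun q => (e q.1, e q.2))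
        ∪ (Finset.Ico (p+1) (n+1)).image (fun j => (p, j)) := by
    ext ⟨i, j⟩
    simp only [Finset.mem_filter, Finset.mem_product, Finset.mem_range, Finset.mem_union,
      Finset.mem_image, Finset.mem_Ico, hlen, Prod.mk.injEq, Prod.exists]
    constructor
    · rintro ⟨⟨hi, hj⟩, hij, hinv⟩
      by_cases hjp : j = p
      · exfalso
        subst hjp
        rw [hg2, hg1 i hij] at hinv
        exact absurd (hlt i (by omega)) (by omega)
      by_cases hip : i = p
      · right
        subst hip
        exact ⟨j, ⟨by omega, by omega⟩, rfl, rfl⟩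
      · left
        refine ⟨(if i < p then i else i - 1), (if j < p then j else j - 1), ⟨⟨?_, ?_⟩, ?_, ?_⟩, ?_, ?_⟩
        · split_ifs <;> omega
        · split_ifs <;> omega
        · split_ifs <;> omega
        · have hi' : l'.getD i 0 = σ.getD (if i < p then i else i - 1) 0 := by
            split_ifs with h
            · exact hg1 i h
            · exact hg3 i (by omega) (by omega)
          have hj' : l'.getD j 0 = σ.getD (if j < p then j else j - 1) 0 := by
            split_ifs with h
            · exact hg1 j h
            · exact hg3 j (by omega) (by omega)
          rw [← hi', ← hj']; exact hinv
        · rw [he]; split_ifs <;> omega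
        · rw [he]; split_ifs <;> omega
    · rintro (⟨a, b, ⟨⟨ha, hb⟩, hab, hinv⟩, hea, heb⟩ | ⟨b, ⟨hb1, hb2⟩, hip, hjb⟩)
      · subst hea; subst heb
        refine ⟨⟨?_, ?_⟩, ?_, ?_⟩
        · rw [he]; split_ifs <;> omega
        · rw [he]; split_ifs <;> omega
        · rw [he, he]; split_ifs <;> omega
        · rw [hE a (by omega), hE b (by omega)]
          exact hinv
      · subst hip; subst hjb
        refine ⟨⟨by omega, by omega⟩, by omega, ?_⟩
        rw [hg2, hg3 b (by omega) (by omega)]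
        exact hlt (b-1) (by omega)
  rw [inv, inv, key, Finset.card_union_of_disjoint, Finset.card_image_of_injOn,
    Finset.card_image_of_injective, Nat.card_Ico]
  · congr 1; omega
  · intro x y hxy; simpa using hxy
  · have einj : ∀ x y, e x = e y → x = y := by
      intro x y h; rw [he, he] at h; split_ifs at h <;> omega
    intro x _ y _ h
    simp only [Prod.mk.injEq] at h
    exact Prod.ext (einj _ _ h.1) (einj _ _ h.2)
  · rw [Finset.disjoint_left]
    rintro ⟨x, y⟩ hx hy
    simp only [Finset.mem_image, Prod.mk.injEq, Prod.exists] at hx hy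
    obtain ⟨a, b, _, hea, _⟩ := hx
    obtain ⟨c, _, hxp, _⟩ := hy
    subst hea
    rw [he] at hxp; split_ifs at hxp <;> omega

lemma mem_desSet_lt (h : i ∈ desSet σ) : i + 1 < σ.length := by
  have := (Finset.mem_filter.1 h).1; rw [Finset.mem_range] at this; omega

lemma maj_insertIdx (hp : p ≤ σ.length) (hv : ∀ x ∈ σ, x < v) :
    maj (σ.insertIdx p v) = maj σ + flabel σ p := by
  set n := σ.length with hn
  have hlt : ∀ i, i < n → σ.getD i 0 < v := fun i hi => by
    rw [List.getD_eq_getElem _ _ hi]; exact hv _ (List.getElem_mem hi)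
  have hlen : (σ.insertIdx p v).length = n + 1 := List.length_insertIdx_of_le_length hp _
  set l' := σ.insertIdx p v with hl'
  have hg1 : ∀ i, i < p → l'.getD i 0 = σ.getD i 0 := fun i h => getD_insertIdx_lt h hp
  have hg2 : l'.getD p 0 = v := getD_insertIdx_self hp
  have hg3 : ∀ i, p < i → i ≤ n → l'.getD i 0 = σ.getD (i-1) 0 :=
    fun i h h' => getD_insertIdx_gt h h'
  set D := desSet σ with hD
  have hDlt : ∀ i ∈ D, i + 1 < n := fun i h => mem_desSet_lt h
  have hmemD : ∀ i, i ∈ D ↔ (i + 1 < n ∧ σ.getD (i+1) 0 < σ.getD i 0) := by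
    intro i
    simp only [hD, desSet, Finset.mem_filter, Finset.mem_range]
    constructor
    · rintro ⟨h1, h2⟩; exact ⟨by omega, h2⟩
    · rintro ⟨h1, h2⟩; exact ⟨by omega, h2⟩
  have key : desSet l' = (D.filter (fun i => i + 1 < p))
      ∪ (if p < n then ({p} : Finset ℕ) else ∅)
      ∪ ((D.filter (fun i => p ≤ i)).image (· + 1)) := by
    ext i
    simp only [desSet, Finset.mem_filter, Finset.mem_range, hlen, Finset.mem_union,
      Finset.mem_image, Nat.add_sub_cancel]
    constructor
    · rintro ⟨hi, hdes⟩
      rcases Nat.lt_trichotomy (i+1) p with h | h | h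
      · left; left
        rw [hg1 _ (by omega), hg1 _ (by omega)] at hdes
        exact ⟨(hmemD i).2 ⟨by omega, hdes⟩, h⟩
      · exfalso
        rw [h, hg2, hg1 _ (by omega)] at hdes
        exact absurd (hlt i (by omega)) (by omega)
      · rcases Nat.lt_trichotomy i p with h' | h' | h'
        · omega
        · left; right
          rw [if_pos (show p < n by omega)]
          simp [h']
        · right
          refine ⟨i - 1, ⟨?_, by omega⟩, by omega⟩
          rw [hg3 _ (by omega) (by omega), hg3 _ (by omega) (by omega)] at hdes
          refine (hmemD _).2 ⟨by omega, ?_⟩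
          have h1 : i - 1 + 1 = i := by omega
          rw [h1]
          convert hdes using 2 <;> omega
    · rintro ((h | h) | ⟨a, ⟨haD, hap⟩, rfl⟩)
      · obtain ⟨haD, hap⟩ := h
        have := (hmemD _).1 haD
        refine ⟨by omega, ?_⟩
        rw [hg1 _ (by omega), hg1 _ (by omega)]
        exact this.2
      · split_ifs at h with hpn
        · rw [Finset.mem_singleton] at h
          subst h
          refine ⟨by omega, ?_⟩
          rw [hg2, hg3 _ (by omega) (by omega)]
          simp only [Nat.add_sub_cancel]
          exact hlt i hpn
        · simp at h
      · have := (hmemD _).1 haD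
        refine ⟨by omega, ?_⟩
        rw [hg3 _ (by omega) (by omega), hg3 _ (by omega) (by omega)]
        simp only [Nat.add_sub_cancel]
        exact this.2
  -- now compute sums
  have hdisj1 : Disjoint (D.filter (fun i => i + 1 < p))
      (if p < n then ({p} : Finset ℕ) else ∅) := by
    rw [Finset.disjoint_left]
    intro a ha hb
    split_ifs at hb
    · rw [Finset.mem_singleton] at hb
      have := (Finset.mem_filter.1 ha).2
      omega
    · simp at hb
  have hdisj2 : Disjoint ((D.filter (fun i => i + 1 < p))
      ∪ (if p < n then ({p} : Finset ℕ) else ∅)) ((D.filter (fun i => p ≤ i)).image (· + 1)) := by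
    rw [Finset.disjoint_left]
    intro a ha hb
    simp only [Finset.mem_image, Finset.mem_filter] at hb
    obtain ⟨b, ⟨_, hpb⟩, rfl⟩ := hb
    rcases Finset.mem_union.1 ha with h | h
    · have := (Finset.mem_filter.1 h).2; omega
    · split_ifs at h
      · rw [Finset.mem_singleton] at h; omega
      · simp at h
  have hsum : maj l' = (∑ i ∈ D.filter (fun i => i + 1 < p), (i+1))
      + (if p < n then p + 1 else 0)
      + ((∑ i ∈ D.filter (fun i => p ≤ i), (i+1)) + (D.filter (fun i => p ≤ i)).card) := by
    rw [maj, key, Finset.sum_union hdisj2, Finset.sum_union hdisj1]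
    congr 1
    · congr 1
      split_ifs <;> simp
    · rw [Finset.sum_image (by intro x _ y _ h; simp only at h; omega), Finset.sum_add_distrib,
        Finset.sum_const, smul_eq_mul, mul_one]
  -- decompose maj σ
  have hMid : D.filter (fun i => i + 1 = p) = if 1 ≤ p ∧ p - 1 ∈ D then {p-1} else ∅ := by
    split_ifs with h
    · ext i
      simp only [Finset.mem_filter, Finset.mem_singleton]
      constructor
      · rintro ⟨_, h2⟩; omega
      · rintro rfl; exact ⟨h.2, by omega⟩
    · ext i
      simp only [Finset.mem_filter, Finset.notMem_empty, iff_false, not_and]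
      intro hi hip
      exact h ⟨by omega, by rw [show p - 1 = i by omega]; exact hi⟩
  have hDsplit : D = (D.filter (fun i => i + 1 < p)) ∪ (D.filter (fun i => i + 1 = p))
      ∪ (D.filter (fun i => p ≤ i)) := by
    ext i
    simp only [Finset.mem_union, Finset.mem_filter]
    constructor
    · intro h
      rcases Nat.lt_trichotomy (i+1) p with h' | h' | h'
      · exact Or.inl (Or.inl ⟨h, h'⟩)
      · exact Or.inl (Or.inr ⟨h, h'⟩)
      · exact Or.inr ⟨h, by omega⟩
    · rintro ((⟨h, _⟩ | ⟨h, _⟩) | ⟨h, _⟩) <;> exact h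
  have hmaj : maj σ = (∑ i ∈ D.filter (fun i => i + 1 < p), (i+1))
      + (if 1 ≤ p ∧ p - 1 ∈ D then p else 0)
      + (∑ i ∈ D.filter (fun i => p ≤ i), (i+1)) := by
    rw [maj, ← hD]
    conv_lhs => rw [hDsplit]
    rw [Finset.sum_union, Finset.sum_union]
    · congr 1
      congr 1
      rw [hMid]
      split_ifs with h
      · rw [Finset.sum_singleton]; omega
      · simp
    · rw [Finset.disjoint_left]
      intro a ha hb
      have := (Finset.mem_filter.1 ha).2
      have := (Finset.mem_filter.1 hb).2
      omega
    · rw [Finset.disjoint_left]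
      intro a ha hb
      rcases Finset.mem_union.1 ha with h | h
      · have := (Finset.mem_filter.1 h).2
        have := (Finset.mem_filter.1 hb).2
        omega
      · have := (Finset.mem_filter.1 h).2
        have := (Finset.mem_filter.1 hb).2
        omega
  -- case analysis
  rw [hsum, hmaj, flabel, ← hn, ← hD]
  by_cases hpn : p = n
  · have h1 : D.filter (fun i => p ≤ i) = ∅ := by
      rw [Finset.filter_eq_empty_iff]
      intro i hi
      have := hDlt i hi
      omega
    have h2 : ¬ (1 ≤ p ∧ p - 1 ∈ D) := by
      rintro ⟨h, h'⟩
      have := hDlt _ h'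
      omega
    rw [if_pos hpn, if_neg h2, if_neg (show ¬ p < n by omega), h1]
    simp
  · simp only [if_neg hpn]
    have hpln : p < n := by omega
    rw [if_pos hpln]
    split_ifs with h <;> omega

lemma desSet_subset (σ : List ℕ) : desSet σ ⊆ Finset.range (σ.length - 1) :=
  Finset.filter_subset _ _

lemma card_desSet_le (σ : List ℕ) : (desSet σ).card ≤ σ.length - 1 := by
  have := Finset.card_le_card (desSet_subset σ)
  simpa using this

lemma flabel_le (hp : p ≤ σ.length) : flabel σ p ≤ σ.length := by
  set n := σ.length with hn
  rw [flabel, ← hn]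
  split_ifs with h1 h2
  · omega
  · have hsub : (desSet σ).filter (fun i => p ≤ i) ⊆ (desSet σ).erase (p - 1) := by
      intro i hi
      obtain ⟨hiD, hip⟩ := Finset.mem_filter.1 hi
      exact Finset.mem_erase.2 ⟨by omega, hiD⟩
    have h3 := Finset.card_le_card hsub
    rw [Finset.card_erase_of_mem h2.2] at h3
    have h4 := card_desSet_le σ
    omega
  · have hsub : (desSet σ).filter (fun i => p ≤ i) ⊆ Finset.Ico p (n - 1) := by
      intro i hi
      obtain ⟨hiD, hip⟩ := Finset.mem_filter.1 hi
      have := mem_desSet_lt hiD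
      exact Finset.mem_Ico.2 ⟨hip, by omega⟩
    have h3 := Finset.card_le_card hsub
    rw [Nat.card_Ico] at h3
    omega

lemma flabel_card_split (σ : List ℕ) (p : ℕ) :
    (desSet σ).card = ((desSet σ).filter (fun i => i < p)).card
      + ((desSet σ).filter (fun i => p ≤ i)).card := by
  rw [← Finset.card_union_of_disjoint]
  · congr 1
    ext i
    simp only [Finset.mem_union, Finset.mem_filter]
    constructor
    · intro h; rcases Nat.lt_or_ge i p with h' | h'
      · exact Or.inl ⟨h, h'⟩
      · exact Or.inr ⟨h, h'⟩
    · rintro (⟨h, _⟩ | ⟨h, _⟩) <;> exact h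
  · rw [Finset.disjoint_left]
    intro a ha hb
    have := (Finset.mem_filter.1 ha).2
    have := (Finset.mem_filter.1 hb).2
    omega

lemma flabel_ne {p p' : ℕ} (hpp : p < p') (hp' : p' ≤ σ.length) :
    flabel σ p ≠ flabel σ p' := by
  set n := σ.length with hn
  set D := desSet σ with hD
  have hanti : ((D.filter (fun i => p' ≤ i)).card : ℕ) ≤ (D.filter (fun i => p ≤ i)).card := by
    refine Finset.card_le_card ?_
    intro i hi
    obtain ⟨h1, h2⟩ := Finset.mem_filter.1 hi
    exact Finset.mem_filter.2 ⟨h1, by omega⟩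
  have hp : p ≤ n := by omega
  have hnd : ∀ q, ¬ (1 ≤ q ∧ q - 1 ∈ D) →
      D.card ≤ q + (D.filter (fun i => q ≤ i)).card := by
    intro q hq
    have hsub : D.filter (fun i => i < q) ⊆ Finset.range (q - 1) := by
      intro i hi
      obtain ⟨hiD, hiq⟩ := Finset.mem_filter.1 hi
      have : i ≠ q - 1 := by
        intro h; exact hq ⟨by omega, h ▸ hiD⟩
      exact Finset.mem_range.2 (by omega)
    have h1 := Finset.card_le_card hsub
    rw [Finset.card_range] at h1
    have h2 := flabel_card_split σ q
    rw [← hD] at h2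
    omega
  have hdd : ∀ q, 1 ≤ q → q - 1 ∈ D →
      1 + (D.filter (fun i => q ≤ i)).card ≤ D.card := by
    intro q hq hqD
    have hsub : D.filter (fun i => q ≤ i) ⊆ D.erase (q - 1) := by
      intro i hi
      obtain ⟨hiD, hiq⟩ := Finset.mem_filter.1 hi
      exact Finset.mem_erase.2 ⟨by omega, hiD⟩
    have h1 := Finset.card_le_card hsub
    rw [Finset.card_erase_of_mem hqD] at h1
    have : 1 ≤ D.card := Finset.card_pos.2 ⟨q - 1, hqD⟩
    omega
  rw [flabel, flabel, ← hn, ← hD]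
  by_cases h2 : p' = n
  · rw [if_pos h2, if_neg (by omega)]
    split_ifs <;> omega
  · rw [if_neg h2, if_neg (by omega)]
    by_cases hd1 : 1 ≤ p ∧ p - 1 ∈ D
    · rw [if_pos hd1]
      by_cases hd2 : 1 ≤ p' ∧ p' - 1 ∈ D
      · rw [if_pos hd2]
        have hlt2 : (D.filter (fun i => p' ≤ i)).card < (D.filter (fun i => p ≤ i)).card := by
          refine Finset.card_lt_card ?_
          rw [Finset.ssubset_iff_of_subset ?_]
          · refine ⟨p' - 1, Finset.mem_filter.2 ⟨hd2.2, by omega⟩, ?_⟩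
            intro hmem
            have := (Finset.mem_filter.1 hmem).2
            omega
          · intro i hi
            obtain ⟨h1, h2⟩ := Finset.mem_filter.1 hi
            exact Finset.mem_filter.2 ⟨h1, by omega⟩
        omega
      · rw [if_neg hd2]
        have ha := hdd p hd1.1 hd1.2
        have hb := hnd p' hd2
        omega
    · rw [if_neg hd1]
      by_cases hd2 : 1 ≤ p' ∧ p' - 1 ∈ D
      · rw [if_pos hd2]
        have ha := hdd p' hd2.1 hd2.2
        have hb := hnd p hd1
        omega
      · rw [if_neg hd2]
        have hkey : (D.filter (fun i => p ≤ i)).card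
            ≤ (D.filter (fun i => p' ≤ i)).card + (p' - p - 1) := by
          have hsplit : D.filter (fun i => p ≤ i) =
              (D.filter (fun i => p ≤ i ∧ i < p')) ∪ (D.filter (fun i => p' ≤ i)) := by
            ext i
            simp only [Finset.mem_union, Finset.mem_filter]
            constructor
            · rintro ⟨h, h'⟩
              rcases Nat.lt_or_ge i p' with h'' | h''
              · exact Or.inl ⟨h, h', h''⟩
              · exact Or.inr ⟨h, h''⟩
            · rintro (⟨h, h', _⟩ | ⟨h, h'⟩)
              · exact ⟨h, h'⟩
              · exact ⟨h, by omega⟩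
          have hdisj : Disjoint (D.filter (fun i => p ≤ i ∧ i < p'))
              (D.filter (fun i => p' ≤ i)) := by
            rw [Finset.disjoint_left]
            intro a ha hb
            have := (Finset.mem_filter.1 ha).2
            have := (Finset.mem_filter.1 hb).2
            omega
          have hsub2 : D.filter (fun i => p ≤ i ∧ i < p') ⊆ Finset.Ico p (p' - 1) := by
            intro i hi
            obtain ⟨hiD, h, h'⟩ := Finset.mem_filter.1 hi
            have : i ≠ p' - 1 := by
              intro hcon
              exact hd2 ⟨by omega, hcon ▸ hiD⟩
            exact Finset.mem_Ico.2 ⟨h, by omega⟩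
          have h1 := Finset.card_le_card hsub2
          rw [Nat.card_Ico] at h1
          have h3 : (D.filter (fun i => p ≤ i)).card
              = (D.filter (fun i => p ≤ i ∧ i < p')).card
                + (D.filter (fun i => p' ≤ i)).card := by
            rw [hsplit, Finset.card_union_of_disjoint hdisj]
          omega
        omega

lemma flabel_image (σ : List ℕ) :
    (Finset.range (σ.length + 1)).image (flabel σ) = Finset.range (σ.length + 1) := by
  have hinj : Set.InjOn (flabel σ) (Finset.range (σ.length + 1)) := by
    intro a ha b hb hab
    simp only [Finset.coe_range, Set.mem_Iio] at ha hb
    by_contra hne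
    rcases Nat.lt_or_ge a b with h | h
    · exact flabel_ne h (by omega) hab
    · exact flabel_ne (show b < a by omega) (by omega) hab.symm
  refine Finset.eq_of_subset_of_card_le ?_ ?_
  · intro x hx
    obtain ⟨pp, hpp, rfl⟩ := Finset.mem_image.1 hx
    rw [Finset.mem_range] at hpp ⊢
    have := flabel_le (σ := σ) (p := pp) (by omega)
    omega
  · rw [Finset.card_image_of_injOn hinj, Finset.card_range]


lemma flabel_injOn (σ : List ℕ) :
    Set.InjOn (flabel σ) (Finset.range (σ.length + 1)) := by
  intro a ha b hb hab
  simp only [Finset.coe_range, Set.mem_Iio] at ha hb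
  by_contra hne
  rcases Nat.lt_or_ge a b with h | h
  · exact flabel_ne h (by omega) hab
  · exact flabel_ne (show b < a by omega) (by omega) hab.symm

lemma sub_image (n : ℕ) :
    (Finset.range (n + 1)).image (fun p => n - p) = Finset.range (n + 1) := by
  refine Finset.eq_of_subset_of_card_le ?_ ?_
  · intro x hx
    obtain ⟨pp, hpp, rfl⟩ := Finset.mem_image.1 hx
    rw [Finset.mem_range] at hpp ⊢
    omega
  · rw [Finset.card_image_of_injOn, Finset.card_range]
    intro a ha b hb hab
    simp only [Finset.coe_range, Set.mem_Iio] at ha hb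
    simp only at hab
    omega

lemma sum_perms_succ {R : Type*} [AddCommMonoid R] (F : List ℕ → R) (n : ℕ) :
    ∑ π ∈ perms (n+1), F π
      = ∑ σ ∈ perms n, ∑ p ∈ Finset.range (n+1), F (σ.insertIdx p (n+1)) := by
  have h : ∑ π ∈ perms (n+1), F π
      = ∑ x ∈ perms n ×ˢ Finset.range (n+1), F (x.1.insertIdx x.2 (n+1)) := by
    refine Finset.sum_bij' (fun π _ => (π.erase (n+1), π.idxOf (n+1)))
        (fun q _ => q.1.insertIdx q.2 (n+1)) ?_ ?_ ?_ ?_ ?_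
    · intro π hπ
      rw [Finset.mem_product]
      refine ⟨erase_mem_perms hπ, ?_⟩
      rw [Finset.mem_range]
      have h1 : (n+1) ∈ π := by
        rw [(mem_perms.1 hπ).mem_iff]
        simp only [List.mem_map, List.mem_range]
        exact ⟨n, by omega, rfl⟩
      have := List.idxOf_lt_length_iff.2 h1
      rw [length_of_mem_perms hπ] at this
      omega
    · rintro ⟨σ, pp⟩ hq
      rw [Finset.mem_product, Finset.mem_range] at hq
      exact insertIdx_mem_perms hq.1 (by omega)
    · intro π hπ
      have h1 : (n+1) ∈ π := by
        rw [(mem_perms.1 hπ).mem_iff]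
        simp only [List.mem_map, List.mem_range]
        exact ⟨n, by omega, rfl⟩
      exact insertIdx_indexOf_erase h1
    · rintro ⟨σ, pp⟩ hq
      rw [Finset.mem_product, Finset.mem_range] at hq
      have hv : (n+1) ∉ σ := not_mem_of_mem_perms hq.1
      have hp : pp ≤ σ.length := by rw [length_of_mem_perms hq.1]; omega
      simp only [Prod.mk.injEq]
      exact ⟨erase_insertIdx hv hp, indexOf_insertIdx hv hp⟩
    · intro π hπ
      have h1 : (n+1) ∈ π := by
        rw [(mem_perms.1 hπ).mem_iff]
        simp only [List.mem_map, List.mem_range]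
        exact ⟨n, by omega, rfl⟩
      rw [insertIdx_indexOf_erase h1]
  rw [h, Finset.sum_product]

lemma perms_one : perms 1 = {[1]} := by
  ext l
  rw [mem_perms, Finset.mem_singleton]
  have : (List.range 1).map (· + 1) = [1] := rfl
  rw [this, List.perm_singleton]

lemma sum_qpow_eq_qFact {R : Type*} [CommSemiring R] (q : R)
    (stat : List ℕ → ℕ) (lab : List ℕ → ℕ → ℕ)
    (hbase : stat [1] = 0)
    (hstep : ∀ (m : ℕ) (σ : List ℕ), σ ∈ perms m → ∀ p ≤ m,
        stat (σ.insertIdx p (m+1)) = stat σ + lab σ p)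
    (himg : ∀ σ : List ℕ,
        (Finset.range (σ.length + 1)).image (lab σ) = Finset.range (σ.length + 1))
    (hinj : ∀ σ : List ℕ, Set.InjOn (lab σ) (Finset.range (σ.length + 1))) :
    ∀ n : ℕ, 1 ≤ n → (∑ l ∈ perms n, q ^ stat l) = qFact q n := by
  intro n
  induction n with
  | zero => omega
  | succ m ih =>
    intro _
    by_cases hm : m = 0
    · subst hm
      rw [perms_one, Finset.sum_singleton, hbase, qFact]
      simp
    · have hm1 : 1 ≤ m := by omega
      rw [sum_perms_succ (fun l => q ^ stat l) m]
      have hstep2 : ∀ σ ∈ perms m, ∑ p ∈ Finset.range (m+1), q ^ stat (σ.insertIdx p (m+1))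
          = q ^ stat σ * ∑ i ∈ Finset.range (m+1), q ^ i := by
        intro σ hσ
        have hlen : σ.length = m := length_of_mem_perms hσ
        have h1 : ∀ p ∈ Finset.range (m+1),
            q ^ stat (σ.insertIdx p (m+1)) = q ^ stat σ * q ^ lab σ p := by
          intro p hp
          rw [Finset.mem_range] at hp
          rw [hstep m σ hσ p (by omega), pow_add]
        rw [Finset.sum_congr rfl h1, ← Finset.mul_sum]
        congr 1
        have h2 : ∑ i ∈ Finset.range (m+1), q ^ i
            = ∑ p ∈ (Finset.range (m+1)).image (lab σ), q ^ p := by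
          rw [← hlen] at *
          rw [himg σ]
        rw [h2, Finset.sum_image]
        intro x hx y hy hxy
        have := hinj σ
        rw [← hlen] at hx hy
        exact this (by simpa using hx) (by simpa using hy) hxy
      rw [Finset.sum_congr rfl hstep2, ← Finset.sum_mul, ih hm1, qFact, qFact,
        Finset.prod_range_succ]

lemma sum_inv_eq_qFact {R : Type*} [CommSemiring R] (q : R) {n : ℕ} (hn : 1 ≤ n) :
    (∑ l ∈ perms n, q ^ inv l) = qFact q n := by
  refine sum_qpow_eq_qFact q inv (fun σ p => σ.length - p) (by decide) ?_ ?_ ?_ n hn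
  · intro m σ hσ p hp
    have hlen : σ.length = m := length_of_mem_perms hσ
    rw [inv_insertIdx (by omega) (fun x hx => lt_of_mem_of_mem_perms hσ hx)]
  · intro σ; exact sub_image σ.length
  · intro σ
    intro a ha b hb hab
    simp only [Finset.coe_range, Set.mem_Iio] at ha hb
    simp only at hab
    omega

lemma sum_maj_eq_qFact {R : Type*} [CommSemiring R] (q : R) {n : ℕ} (hn : 1 ≤ n) :
    (∑ l ∈ perms n, q ^ maj l) = qFact q n := by
  refine sum_qpow_eq_qFact q maj flabel (by decide) ?_ flabel_image flabel_injOn n hn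
  · intro m σ hσ p hp
    have hlen : σ.length = m := length_of_mem_perms hσ
    exact maj_insertIdx (by omega) (fun x hx => lt_of_mem_of_mem_perms hσ hx)

end BS

/-- inv and maj are equidistributed over Sₙ, both with
generating function the q-factorial [n]_q!. -/
theorem inv_maj_equidistributed_qFactorial {R : Type*} [CommSemiring R] (q : R)
    (n : ℕ) (hn : 1 ≤ n) :
    (∑ l ∈ BS.perms n, q ^ BS.inv l) = (∑ l ∈ BS.perms n, q ^ BS.maj l) ∧
    (∑ l ∈ BS.perms n, q ^ BS.maj l) = BS.qFact q n := by
  rw [BS.sum_inv_eq_qFact q hn, BS.sum_maj_eq_qFact q hn]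
  exact ⟨rfl, rfl⟩
end

section
/- For σ ∈ S_{n-1} and 0 ≤ i ≤ n-1, inserting n into σ at the position labeled i in the maj-labeling yields a permutation π ∈ S_n with maj(π) = maj(σ) + i. -/
section MajAux
open Finset

lemma getD_insIdx_lt (σ : List ℕ) (v p k : ℕ) (hp : p ≤ σ.length) (hk : k < p) :
    (σ.insertIdx p v).getD k 0 = σ.getD k 0 := by
  have hk' : k < σ.length := lt_of_lt_of_le hk hp
  have h2 : k < (σ.insertIdx p v).length := by
    rw [List.length_insertIdx_of_le_length hp]; omega
  rw [List.getD_eq_getElem _ _ h2, List.getD_eq_getElem _ _ hk']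
  exact List.getElem_insertIdx_of_lt hk h2

lemma getD_insIdx_self (σ : List ℕ) (v p : ℕ) (hp : p ≤ σ.length) :
    (σ.insertIdx p v).getD p 0 = v := by
  have h2 : p < (σ.insertIdx p v).length := by rw [List.length_insertIdx_of_le_length hp]; omega
  rw [List.getD_eq_getElem _ _ h2]
  exact List.getElem_insertIdx_self h2

lemma getD_insIdx_succ (σ : List ℕ) (v p k : ℕ) (hp : p ≤ σ.length) (hk : p ≤ k) :
    (σ.insertIdx p v).getD (k + 1) 0 = σ.getD k 0 := by
  obtain ⟨k', rfl⟩ : ∃ k', k = p + k' := ⟨k - p, by omega⟩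
  by_cases hkm : p + k' < σ.length
  · have h2 : p + k' + 1 < (σ.insertIdx p v).length := by
      rw [List.length_insertIdx_of_le_length hp]; omega
    rw [List.getD_eq_getElem _ _ h2, List.getD_eq_getElem _ _ hkm]
    exact List.getElem_insertIdx_add_succ σ v p k' hkm
  · rw [List.getD_eq_default, List.getD_eq_default]
    · omega
    · rw [List.length_insertIdx_of_le_length hp]; omega

lemma maj_eq_sum (l : List ℕ) :
    BS.maj l = ∑ j ∈ Finset.range (l.length - 1),
      if l.getD (j+1) 0 < l.getD j 0 then j + 1 else 0 := by
  rw [BS.maj, BS.desSet, Finset.sum_filter]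

lemma des_eq_card (l : List ℕ) :
    BS.des l = ((Finset.range (l.length - 1)).filter
      (fun j => l.getD (j+1) 0 < l.getD j 0)).card := rfl

lemma card_descSpace_Ico (σ : List ℕ) (p : ℕ) :
    ((Finset.Ico (p+1) σ.length).filter (fun t => BS.isDescSpace σ t)).card
      = ((Finset.Ico p (σ.length - 1)).filter
          (fun k => σ.getD (k+1) 0 < σ.getD k 0)).card := by
  apply Finset.card_bij' (fun t _ => t - 1) (fun k _ => k + 1)
  · intro t ht
    simp only [Finset.mem_filter] at ht
    simp only [Finset.mem_filter, Finset.mem_Ico, BS.isDescSpace] at ht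
    omega
  · intro k _; omega
  · intro t ht
    simp only [Finset.mem_filter] at ht ⊢
    simp only [Finset.mem_filter, Finset.mem_Ico, BS.isDescSpace] at ht ⊢
    obtain ⟨⟨h1, h2⟩, h3, h4, h5⟩ := ht
    rw [show t - 1 + 1 = t by omega]
    exact ⟨by omega, h5⟩
  · intro k hk
    simp only [Finset.mem_filter] at hk ⊢
    simp only [Finset.mem_filter, Finset.mem_Ico, BS.isDescSpace] at hk ⊢
    obtain ⟨⟨h1, h2⟩, h3⟩ := hk
    rw [show k + 1 - 1 = k by omega]
    exact ⟨by omega, by omega, by omega, h3⟩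

lemma card_descSpace_range (σ : List ℕ) (p : ℕ) (hplt : p < σ.length)
    (hp : ¬ BS.isDescSpace σ p) :
    ((Finset.range p).filter (fun t => BS.isDescSpace σ t)).card
      = ((Finset.range p).filter (fun k => σ.getD (k+1) 0 < σ.getD k 0)).card := by
  apply Finset.card_bij' (fun t _ => t - 1) (fun k _ => k + 1)
  · intro t ht
    simp only [Finset.mem_filter] at ht
    simp only [Finset.mem_filter, Finset.mem_range, BS.isDescSpace] at ht
    omega
  · intro k _; omega
  · intro t ht
    simp only [Finset.mem_filter] at ht ⊢
    simp only [Finset.mem_filter, Finset.mem_range, BS.isDescSpace] at ht ⊢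
    obtain ⟨h1, h2, h3, h4⟩ := ht
    rw [show t - 1 + 1 = t by omega]
    exact ⟨by omega, h4⟩
  · intro k hk
    simp only [Finset.mem_filter] at hk ⊢
    simp only [Finset.mem_filter, Finset.mem_range, BS.isDescSpace] at hk ⊢
    obtain ⟨h1, h2⟩ := hk
    have hne : k + 1 ≠ p := by
      intro h
      exact hp ⟨by omega, by omega, by rw [show p - 1 = k by omega]; exact h ▸ h2⟩
    rw [show k + 1 - 1 = k by omega]
    exact ⟨by omega, by omega, by omega, h2⟩

lemma des_split (σ : List ℕ) (p : ℕ) (hplt : p < σ.length) :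
    BS.des σ = ((Finset.range p).filter
        (fun k => σ.getD (k+1) 0 < σ.getD k 0)).card
      + ((Finset.Ico p (σ.length - 1)).filter
          (fun k => σ.getD (k+1) 0 < σ.getD k 0)).card := by
  rw [des_eq_card, Finset.range_eq_Ico,
    ← Finset.Ico_union_Ico_eq_Ico (Nat.zero_le p) (by omega : p ≤ σ.length - 1),
    Finset.filter_union, Finset.card_union_of_disjoint, ← Finset.range_eq_Ico]
  exact Finset.disjoint_filter_filter (Finset.Ico_disjoint_Ico_consecutive 0 p _)

lemma maj_insertIdx_label (σ : List ℕ) (v p : ℕ) (hp : p ≤ σ.length)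
    (hv : ∀ j < σ.length, σ.getD j 0 < v) :
    BS.maj (σ.insertIdx p v) = BS.maj σ + BS.majLabel σ p := by
  by_cases hpm : p = σ.length
  · -- insertion at the very end
    subst hpm
    rw [BS.majLabel, if_pos rfl, Nat.add_zero, List.insertIdx_length_self]
    rw [maj_eq_sum, maj_eq_sum]
    rcases Nat.eq_zero_or_pos σ.length with h0 | h1
    · rw [List.length_append, h0]; simp
    have hlen : (σ ++ [v]).length - 1 = σ.length := by simp
    rw [hlen, show σ.length = (σ.length - 1) + 1 by omega, Finset.sum_range_succ]
    have hgetA : ∀ j < σ.length, (σ ++ [v]).getD j 0 = σ.getD j 0 := by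
      intro j hj
      rw [List.getD_eq_getElem _ _ (by simp; omega), List.getD_eq_getElem _ _ hj]
      exact List.getElem_append_left hj
    have hlast : (if (σ ++ [v]).getD (σ.length - 1 + 1) 0 < (σ ++ [v]).getD (σ.length - 1) 0
        then σ.length - 1 + 1 else 0) = 0 := by
      rw [show σ.length - 1 + 1 = σ.length by omega]
      have h2 : (σ ++ [v]).getD σ.length 0 = v := by
        rw [List.getD_eq_getElem _ _ (by simp)]
        simp
      rw [h2, hgetA (σ.length - 1) (by omega), if_neg (by have := hv (σ.length - 1) (by omega); omega)]
    rw [hlast, add_zero]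
    apply Finset.sum_congr rfl
    intro j hj
    simp only [Finset.mem_range] at hj
    rw [hgetA j (by omega), hgetA (j+1) (by omega)]
  · -- insertion strictly inside
    have hplt : p < σ.length := lt_of_le_of_ne hp hpm
    have hlen : (σ.insertIdx p v).length = σ.length + 1 := List.length_insertIdx_of_le_length hp _
    set g : ℕ → ℕ := fun j => if σ.getD (j+1) 0 < σ.getD j 0 then j + 1 else 0 with hg
    set f : ℕ → ℕ := fun j =>
      if (σ.insertIdx p v).getD (j+1) 0 < (σ.insertIdx p v).getD j 0 then j + 1 else 0 with hf
    set Dge : ℕ := ((Finset.Ico p (σ.length - 1)).filter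
      (fun k => σ.getD (k+1) 0 < σ.getD k 0)).card with hDge
    have hmajπ : BS.maj (σ.insertIdx p v) = ∑ j ∈ Finset.range σ.length, f j := by
      rw [maj_eq_sum, hlen, Nat.add_sub_cancel]
    have hsplit : ∑ j ∈ Finset.range σ.length, f j
        = ∑ j ∈ Finset.range p, f j + f p + ∑ j ∈ Finset.Ico (p+1) σ.length, f j := by
      rw [← Finset.sum_range_add_sum_Ico f (by omega : p+1 ≤ σ.length), Finset.sum_range_succ]
    have hfp : f p = p + 1 := by
      simp only [hf]
      rw [getD_insIdx_self σ v p hp, getD_insIdx_succ σ v p p hp le_rfl,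
        if_pos (hv p hplt)]
    have hsum1 : ∑ j ∈ Finset.range p, f j = ∑ j ∈ Finset.range (p-1), g j := by
      rcases Nat.eq_zero_or_pos p with h0 | h1
      · simp [h0]
      · rw [show p = (p-1) + 1 by omega, Finset.sum_range_succ,
          show p - 1 + 1 - 1 = p - 1 by omega]
        have hlast : f (p-1) = 0 := by
          simp only [hf]
          rw [show p - 1 + 1 = p by omega, getD_insIdx_self σ v p hp,
            getD_insIdx_lt σ v p (p-1) hp (by omega)]
          rw [if_neg (by have := hv (p-1) (by omega); omega)]
        rw [hlast, add_zero]
        apply Finset.sum_congr rfl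
        intro j hj
        simp only [Finset.mem_range] at hj
        simp only [hf, hg]
        rw [getD_insIdx_lt σ v p (j+1) hp (by omega), getD_insIdx_lt σ v p j hp (by omega)]
    have hsum2 : ∑ j ∈ Finset.Ico (p+1) σ.length, f j
        = ∑ k ∈ Finset.Ico p (σ.length - 1), g k + Dge := by
      rw [hDge, Finset.card_filter, ← Finset.sum_add_distrib,
        Finset.sum_Ico_eq_sum_range, Finset.sum_Ico_eq_sum_range,
        show σ.length - 1 - p = σ.length - (p+1) by omega]
      apply Finset.sum_congr rfl
      intro i hi
      simp only [Finset.mem_range] at hi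
      simp only [hf, hg]
      rw [show p + 1 + i = (p + i) + 1 from by omega]
      rw [getD_insIdx_succ σ v p (p+i+1) hp (by omega),
          getD_insIdx_succ σ v p (p+i) hp (by omega)]
      split_ifs <;> omega
    have hmajσ : BS.maj σ = ∑ j ∈ Finset.range p, g j
        + ∑ k ∈ Finset.Ico p (σ.length - 1), g k := by
      rw [maj_eq_sum, Finset.sum_range_add_sum_Ico g (by omega : p ≤ σ.length - 1)]
    have hπ : BS.maj (σ.insertIdx p v)
        = ∑ j ∈ Finset.range (p-1), g j + (p+1)
          + ∑ k ∈ Finset.Ico p (σ.length - 1), g k + Dge := by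
      rw [hmajπ, hsplit, hfp, hsum1, hsum2]; ring
    by_cases hdesc : BS.isDescSpace σ p
    · -- p is a descent space
      rw [BS.majLabel, if_neg hpm, if_pos hdesc]
      obtain ⟨hp1, -, hp3⟩ := hdesc
      have hgp : ∑ j ∈ Finset.range p, g j = ∑ j ∈ Finset.range (p-1), g j + p := by
        rw [show p = (p-1) + 1 by omega, Finset.sum_range_succ,
          show p - 1 + 1 - 1 = p - 1 by omega]
        simp only [hg]
        rw [show p - 1 + 1 = p by omega, if_pos hp3]
      rw [hπ, hmajσ, hgp, card_descSpace_Ico σ p, ← hDge]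
      ring
    · -- p is not a descent space
      rw [BS.majLabel, if_neg hpm, if_neg hdesc]
      have hC : ((Finset.range p).filter (fun t => BS.isDescSpace σ t)).card
          = ((Finset.range p).filter (fun k => σ.getD (k+1) 0 < σ.getD k 0)).card :=
        card_descSpace_range σ p hplt hdesc
      have hNC : ((Finset.range p).filter (fun t => BS.isDescSpace σ t)).card
          + ((Finset.range p).filter (fun t => ¬ BS.isDescSpace σ t)).card = p := by
        rw [Finset.card_filter_add_card_filter_not, Finset.card_range]
      have hdes : BS.des σ = ((Finset.range p).filter
          (fun k => σ.getD (k+1) 0 < σ.getD k 0)).card + Dge := des_split σ p hplt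
      have hgp : ∑ j ∈ Finset.range p, g j = ∑ j ∈ Finset.range (p-1), g j := by
        rcases Nat.eq_zero_or_pos p with h0 | h1
        · simp [h0]
        · rw [show p = (p-1) + 1 by omega, Finset.sum_range_succ,
            show p - 1 + 1 - 1 = p - 1 by omega]
          have : ¬ (σ.getD (p - 1 + 1) 0 < σ.getD (p-1) 0) := by
            rw [show p - 1 + 1 = p by omega]
            intro hdd
            exact hdesc ⟨h1, hplt, hdd⟩
          simp only [hg]
          rw [if_neg this, add_zero]
      rw [hπ, hmajσ, hgp]
      omega

lemma majLabel_le (σ : List ℕ) (p : ℕ) (hp : p ≤ σ.length) :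
    BS.majLabel σ p ≤ σ.length := by
  by_cases hpm : p = σ.length
  · rw [BS.majLabel, if_pos hpm]; omega
  have hplt : p < σ.length := lt_of_le_of_ne hp hpm
  by_cases hdesc : BS.isDescSpace σ p
  · rw [BS.majLabel, if_neg hpm, if_pos hdesc]
    have h1 := Finset.card_filter_le (Finset.Ico (p+1) σ.length)
      (fun t => BS.isDescSpace σ t)
    rw [Nat.card_Ico] at h1
    obtain ⟨hp1, -, -⟩ := hdesc
    omega
  · rw [BS.majLabel, if_neg hpm, if_neg hdesc]
    have hC := card_descSpace_range σ p hplt hdesc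
    have hNC : ((Finset.range p).filter (fun t => BS.isDescSpace σ t)).card
        + ((Finset.range p).filter (fun t => ¬ BS.isDescSpace σ t)).card = p := by
      rw [Finset.card_filter_add_card_filter_not, Finset.card_range]
    have hdes := des_split σ p hplt
    have hDle : ((Finset.Ico p (σ.length - 1)).filter
        (fun k => σ.getD (k+1) 0 < σ.getD k 0)).card ≤ σ.length - 1 - p := by
      have := Finset.card_filter_le (Finset.Ico p (σ.length - 1))
        (fun k => σ.getD (k+1) 0 < σ.getD k 0)
      rwa [Nat.card_Ico] at this
    omega

lemma majLabel_desc_bounds (σ : List ℕ) (p : ℕ) (hdesc : BS.isDescSpace σ p) :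
    1 ≤ BS.majLabel σ p ∧ BS.majLabel σ p ≤ BS.des σ := by
  obtain ⟨hp1, hplt, hdd⟩ := hdesc
  have hpm : p ≠ σ.length := by omega
  rw [BS.majLabel, if_neg hpm, if_pos ⟨hp1, hplt, hdd⟩]
  refine ⟨by omega, ?_⟩
  rw [card_descSpace_Ico σ p, des_eq_card]
  have hsub : (Finset.Ico p (σ.length - 1)).filter
      (fun k => σ.getD (k+1) 0 < σ.getD k 0)
      ⊆ (Finset.range (σ.length - 1)).filter
      (fun k => σ.getD (k+1) 0 < σ.getD k 0) := by
    apply Finset.filter_subset_filter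
    intro x hx
    simp only [Finset.mem_Ico, Finset.mem_range] at hx ⊢
    omega
  have hmem : p - 1 ∈ (Finset.range (σ.length - 1)).filter
      (fun k => σ.getD (k+1) 0 < σ.getD k 0) := by
    simp only [Finset.mem_filter, Finset.mem_range]
    rw [show p - 1 + 1 = p by omega]
    exact ⟨by omega, hdd⟩
  have hnot : p - 1 ∉ (Finset.Ico p (σ.length - 1)).filter
      (fun k => σ.getD (k+1) 0 < σ.getD k 0) := by
    simp only [Finset.mem_filter, Finset.mem_Ico]
    omega
  have := Finset.card_lt_card ((Finset.ssubset_iff_of_subset hsub).mpr ⟨p - 1, hmem, hnot⟩)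
  omega

lemma majLabel_lt_of_lt (σ : List ℕ) (p q : ℕ) (hq : q ≤ σ.length) (hpq : p < q) :
    BS.majLabel σ p ≠ BS.majLabel σ q := by
  have hpm : p ≠ σ.length := by omega
  by_cases hqm : q = σ.length
  · -- label q = 0, label p ≥ 1
    have hq0 : BS.majLabel σ q = 0 := by rw [BS.majLabel, if_pos hqm]
    rw [hq0, BS.majLabel, if_neg hpm]
    by_cases hdesc : BS.isDescSpace σ p
    · rw [if_pos hdesc]; omega
    · rw [if_neg hdesc]; omega
  · have hqlt : q < σ.length := lt_of_le_of_ne hq hqm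
    by_cases hdp : BS.isDescSpace σ p <;> by_cases hdq : BS.isDescSpace σ q
    · -- both descent spaces : label q < label p
      rw [BS.majLabel, if_neg hpm, if_pos hdp, BS.majLabel, if_neg hqm, if_pos hdq]
      have hsub : (Finset.Ico (q+1) σ.length).filter (fun t => BS.isDescSpace σ t)
          ⊆ (Finset.Ico (p+1) σ.length).filter (fun t => BS.isDescSpace σ t) := by
        apply Finset.filter_subset_filter
        intro x hx
        simp only [Finset.mem_Ico] at hx ⊢
        omega
      have hmem : q ∈ (Finset.Ico (p+1) σ.length).filter
          (fun t => BS.isDescSpace σ t) := by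
        simp only [Finset.mem_filter, Finset.mem_Ico]
        exact ⟨⟨by omega, hqlt⟩, hdq⟩
      have hnot : q ∉ (Finset.Ico (q+1) σ.length).filter
          (fun t => BS.isDescSpace σ t) := by
        simp only [Finset.mem_filter, Finset.mem_Ico]
        omega
      have := Finset.card_lt_card ((Finset.ssubset_iff_of_subset hsub).mpr ⟨q, hmem, hnot⟩)
      omega
    · -- p descent, q not : label p ≤ des < label q
      have h1 := (majLabel_desc_bounds σ p hdp).2
      have h2 : BS.des σ + 1 ≤ BS.majLabel σ q := by
        rw [BS.majLabel, if_neg hqm, if_neg hdq]; omega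
      omega
    · -- q descent, p not
      have h1 := (majLabel_desc_bounds σ q hdq).2
      have h2 : BS.des σ + 1 ≤ BS.majLabel σ p := by
        rw [BS.majLabel, if_neg hpm, if_neg hdp]; omega
      omega
    · -- neither : label p < label q
      rw [BS.majLabel, if_neg hpm, if_neg hdp, BS.majLabel, if_neg hqm, if_neg hdq]
      have hsub : (Finset.range p).filter (fun t => ¬ BS.isDescSpace σ t)
          ⊆ (Finset.range q).filter (fun t => ¬ BS.isDescSpace σ t) := by
        apply Finset.filter_subset_filter
        intro x hx
        simp only [Finset.mem_range] at hx ⊢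
        omega
      have hmem : p ∈ (Finset.range q).filter (fun t => ¬ BS.isDescSpace σ t) := by
        simp only [Finset.mem_filter, Finset.mem_range]
        exact ⟨hpq, hdp⟩
      have hnot : p ∉ (Finset.range p).filter (fun t => ¬ BS.isDescSpace σ t) := by
        simp only [Finset.mem_filter, Finset.mem_range]
        omega
      have := Finset.card_lt_card ((Finset.ssubset_iff_of_subset hsub).mpr ⟨p, hmem, hnot⟩)
      omega

lemma majLabel_injOn (σ : List ℕ) (p q : ℕ) (hp : p ≤ σ.length) (hq : q ≤ σ.length)
    (h : BS.majLabel σ p = BS.majLabel σ q) : p = q := by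
  rcases lt_trichotomy p q with hlt | heq | hgt
  · exact absurd h (majLabel_lt_of_lt σ p q hq hlt)
  · exact heq
  · exact absurd h.symm (majLabel_lt_of_lt σ q p hp hgt)

lemma exists_majLabel (σ : List ℕ) (i : ℕ) (hi : i ≤ σ.length) :
    ∃ p, p ≤ σ.length ∧ BS.majLabel σ p = i := by
  have := Finset.surj_on_of_inj_on_of_card_le
    (s := Finset.range (σ.length + 1)) (t := Finset.range (σ.length + 1))
    (fun p _ => BS.majLabel σ p)
    (fun p hp => by
      simp only [Finset.mem_range] at hp ⊢
      have := majLabel_le σ p (by omega); omega)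
    (fun p q hp hq h => by
      simp only [Finset.mem_range] at hp hq
      exact majLabel_injOn σ p q (by omega) (by omega) h)
    le_rfl i (by simp only [Finset.mem_range]; omega)
  obtain ⟨p, hp, hlab⟩ := this
  simp only [Finset.mem_range] at hp
  exact ⟨p, by omega, hlab.symm⟩

lemma spaceOfLabel_majLabel (σ : List ℕ) (i : ℕ) (hi : i ≤ σ.length) :
    BS.spaceOfLabel BS.majLabel σ i ≤ σ.length ∧
      BS.majLabel σ (BS.spaceOfLabel BS.majLabel σ i) = i := by
  obtain ⟨p, hp, hlab⟩ := exists_majLabel σ i hi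
  rw [BS.spaceOfLabel]
  have hsome : ((List.range (σ.length+1)).find?
      (fun j => decide (BS.majLabel σ j = i))).isSome := by
    rw [List.find?_isSome]
    exact ⟨p, by simp only [List.mem_range]; omega, by simpa using hlab⟩
  obtain ⟨q, hq⟩ := Option.isSome_iff_exists.mp hsome
  rw [hq, Option.getD_some]
  have h1 := List.find?_some hq
  have h2 := List.mem_of_find?_eq_some hq
  simp only [List.mem_range] at h2
  simp only [decide_eq_true_eq] at h1
  exact ⟨by omega, h1⟩

end MajAux
/-- inserting `n` at the space with maj-label `i` adds `i` to maj. -/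
theorem maj_insertAtMajLabel (n : ℕ) (σ : List ℕ) (i : ℕ)
    (hn : 1 ≤ n) (hσ : BS.isPerm σ (n - 1)) (hi : i ≤ n - 1) :
    BS.maj (BS.insertAtMajLabel i σ n) = BS.maj σ + i := by
  have hlen : σ.length = n - 1 := by
    have := hσ.length_eq
    simpa using this
  have hv : ∀ j < σ.length, σ.getD j 0 < n := by
    intro j hj
    have hmem : σ.getD j 0 ∈ σ := by
      rw [List.getD_eq_getElem _ _ hj]
      exact List.getElem_mem hj
    have h2 : σ.getD j 0 ∈ (List.range (n-1)).map (· + 1) := hσ.mem_iff.mp hmem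
    simp only [List.mem_map, List.mem_range] at h2
    obtain ⟨r, hr, hre⟩ := h2
    omega
  obtain ⟨hle, hlab⟩ := spaceOfLabel_majLabel σ i (by omega)
  rw [BS.insertAtMajLabel, maj_insertIdx_label σ n _ hle hv, hlab]
end

section
/- For σ ∈ S_{n-1} and i ∈ {0,1,...,des(σ)} ∪ {des(σ)+2,...,n-1}, inserting n into σ at the position labeled i in the stat-labeling yields a permutation π with stat(π) = stat(σ) + i. -/
namespace StatAux

open Finset

lemma getD_insertIdx_lt (l : List ℕ) (v p q : ℕ) (hq : q < p) (hp : p ≤ l.length) :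
    (l.insertIdx p v).getD q 0 = l.getD q 0 := by
  have hq' : q < l.length := lt_of_lt_of_le hq hp
  have hlen : (l.insertIdx p v).length = l.length + 1 := List.length_insertIdx_of_le_length hp v
  rw [List.getD_eq_getElem _ _ (by omega), List.getD_eq_getElem _ _ hq']
  exact List.getElem_insertIdx_of_lt hq _

lemma getD_insertIdx_self (l : List ℕ) (v p : ℕ) (hp : p ≤ l.length) :
    (l.insertIdx p v).getD p 0 = v := by
  have hlen : (l.insertIdx p v).length = l.length + 1 := List.length_insertIdx_of_le_length hp v
  rw [List.getD_eq_getElem _ _ (by omega)]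
  exact List.getElem_insertIdx_self _

lemma getD_insertIdx_gt (l : List ℕ) (v p q : ℕ) (hq : p < q) (hp : p ≤ l.length) :
    (l.insertIdx p v).getD q 0 = l.getD (q - 1) 0 := by
  have hlen : (l.insertIdx p v).length = l.length + 1 := List.length_insertIdx_of_le_length hp v
  obtain ⟨k, rfl⟩ : ∃ k, q = p + k + 1 := ⟨q - p - 1, by omega⟩
  by_cases h : p + k < l.length
  · rw [List.getD_eq_getElem _ _ (by omega), List.getD_eq_getElem _ _ (by omega)]
    have := List.getElem_insertIdx_add_succ l v p k (by omega)
    rw [this]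
    congr 1
  · rw [List.getD_eq_default _ _ (by omega), List.getD_eq_default _ _ (by omega)]

def emb (p t : ℕ) : ℕ := if t < p then t else t + 1

lemma emb_lt {p t : ℕ} (h : t < p) : emb p t = t := if_pos h

lemma emb_ge {p t : ℕ} (h : p ≤ t) : emb p t = t + 1 := if_neg (by omega)

lemma sum_split (m p : ℕ) (hp : p ≤ m) (f : ℕ → ℕ) :
    ∑ q ∈ range (m + 1), f q = f p + ∑ t ∈ range m, f (emb p t) := by
  rw [← Finset.add_sum_erase _ f (show p ∈ range (m+1) by simp; omega)]
  congr 1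
  apply Finset.sum_bij' (i := fun q _ => if q < p then q else q - 1)
    (j := fun t _ => emb p t)
  · intro a ha
    simp only [mem_erase, mem_range] at ha
    simp only [mem_range]
    split <;> omega
  · intro a ha
    simp only [mem_range] at ha
    simp only [emb, mem_erase, mem_range]
    split <;> omega
  · intro a ha
    simp only [mem_erase, mem_range] at ha
    simp only [emb]; split <;> (try split) <;> omega
  · intro a ha
    simp only [mem_range] at ha
    simp only [emb]; split <;> (try split) <;> omega
  · intro a ha
    simp only [mem_erase, mem_range] at ha
    congr 1
    simp only [emb]; split <;> (try split) <;> omega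


def cnt (P : ℕ → ℕ → ℕ → Prop) [∀ a b c, Decidable (P a b c)] (l : List ℕ) : ℕ :=
  ((Finset.range l.length ×ˢ Finset.range l.length).filter
    (fun q => q.1 + 2 ≤ q.2 ∧ P (l.getD q.1 0) (l.getD (q.1 + 1) 0) (l.getD q.2 0))).card

lemma cnt_eq_sum (P : ℕ → ℕ → ℕ → Prop) [∀ a b c, Decidable (P a b c)] (l : List ℕ) :
    cnt P l = ∑ q1 ∈ range l.length, ∑ q2 ∈ range l.length,
      (if q1 + 2 ≤ q2 ∧ P (l.getD q1 0) (l.getD (q1 + 1) 0) (l.getD q2 0) then 1 else 0) := by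
  rw [cnt, Finset.card_filter, Finset.sum_product]

theorem cnt_insertIdx (σ : List ℕ) (p v : ℕ) (P : ℕ → ℕ → ℕ → Prop)
    [∀ a b c, Decidable (P a b c)] (hp : 1 ≤ p) (hpm : p ≤ σ.length) :
    cnt P (σ.insertIdx p v)
      + ((range σ.length).filter
          (fun t => p + 1 ≤ t ∧ P (σ.getD (p - 1) 0) (σ.getD p 0) (σ.getD t 0))).card
    = cnt P σ
      + ((range σ.length).filter
          (fun t => p ≤ t ∧ P (σ.getD (p - 1) 0) v (σ.getD t 0))).card
      + ((range σ.length).filter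
          (fun t => p + 1 ≤ t ∧ P v (σ.getD p 0) (σ.getD t 0))).card
      + ((range σ.length).filter
          (fun t => t + 2 ≤ p ∧ P (σ.getD t 0) (σ.getD (t + 1) 0) v)).card := by
  set m := σ.length with hm
  have hg1 : ∀ q < p, (σ.insertIdx p v).getD q 0 = σ.getD q 0 :=
    fun q hq => getD_insertIdx_lt σ v p q hq hpm
  have hg2 : (σ.insertIdx p v).getD p 0 = v := getD_insertIdx_self σ v p hpm
  have hg3 : ∀ q, p < q → (σ.insertIdx p v).getD q 0 = σ.getD (q - 1) 0 :=
    fun q hq => getD_insertIdx_gt σ v p q hq hpm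
  have hlen : (σ.insertIdx p v).length = m + 1 := List.length_insertIdx_of_le_length hpm v
  set F : ℕ → ℕ → ℕ := fun q1 q2 =>
    if q1 + 2 ≤ q2 ∧ P ((σ.insertIdx p v).getD q1 0) ((σ.insertIdx p v).getD (q1 + 1) 0)
        ((σ.insertIdx p v).getD q2 0) then 1 else 0 with hF
  set G : ℕ → ℕ → ℕ := fun q1 q2 =>
    if q1 + 2 ≤ q2 ∧ P (σ.getD q1 0) (σ.getD (q1 + 1) 0) (σ.getD q2 0) then 1 else 0 with hG
  have hπ : cnt P (σ.insertIdx p v) = ∑ q1 ∈ range (m + 1), ∑ q2 ∈ range (m + 1), F q1 q2 := by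
    rw [cnt_eq_sum, hlen]
  have hσc : cnt P σ = ∑ t1 ∈ range m, ∑ t2 ∈ range m, G t1 t2 := cnt_eq_sum P σ
  have e1 : ∑ q1 ∈ range (m + 1), (∑ q2 ∈ range (m + 1), F q1 q2)
      = (∑ q2 ∈ range (m + 1), F p q2)
        + ∑ t1 ∈ range m, ∑ q2 ∈ range (m + 1), F (emb p t1) q2 :=
    sum_split m p hpm _
  have e2 : ∑ q2 ∈ range (m + 1), F p q2 = F p p + ∑ t2 ∈ range m, F p (emb p t2) :=
    sum_split m p hpm _
  have e3 : ∑ t1 ∈ range m, (∑ q2 ∈ range (m + 1), F (emb p t1) q2)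
      = ∑ t1 ∈ range m, (F (emb p t1) p + ∑ t2 ∈ range m, F (emb p t1) (emb p t2)) :=
    Finset.sum_congr rfl (fun t1 _ => sum_split m p hpm _)
  have e4 : ∑ t1 ∈ range m, (F (emb p t1) p + ∑ t2 ∈ range m, F (emb p t1) (emb p t2))
      = ∑ t1 ∈ range m, F (emb p t1) p
        + ∑ t1 ∈ range m, ∑ t2 ∈ range m, F (emb p t1) (emb p t2) :=
    Finset.sum_add_distrib
  have hm1 : 1 ≤ m := le_trans hp hpm
  have hmem : p - 1 ∈ range m := by simp only [mem_range]; omega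
  have e5 : ∑ t2 ∈ range m, F (emb p (p - 1)) (emb p t2)
        + ∑ t1 ∈ (range m).erase (p - 1), ∑ t2 ∈ range m, F (emb p t1) (emb p t2)
      = ∑ t1 ∈ range m, ∑ t2 ∈ range m, F (emb p t1) (emb p t2) :=
    Finset.add_sum_erase _ (fun t1 => ∑ t2 ∈ range m, F (emb p t1) (emb p t2)) hmem
  have e6 : ∑ t2 ∈ range m, G (p - 1) t2
        + ∑ t1 ∈ (range m).erase (p - 1), ∑ t2 ∈ range m, G t1 t2
      = ∑ t1 ∈ range m, ∑ t2 ∈ range m, G t1 t2 :=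
    Finset.add_sum_erase _ (fun t1 => ∑ t2 ∈ range m, G t1 t2) hmem
  have hFpp : F p p = 0 := by
    simp only [hF]
    exact if_neg (by rintro ⟨h, -⟩; omega)
  have hrow2 : ∑ t2 ∈ range m, F p (emb p t2)
      = ((range m).filter (fun t => p + 1 ≤ t ∧ P v (σ.getD p 0) (σ.getD t 0))).card := by
    rw [Finset.card_filter]
    apply Finset.sum_congr rfl
    intro t2 ht2
    rcases lt_or_ge t2 p with h | h
    · rw [emb_lt h]
      simp only [hF]
      rw [if_neg (by rintro ⟨c, -⟩; omega), if_neg (by rintro ⟨c, -⟩; omega)]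
    · rw [emb_ge h]
      simp only [hF]
      by_cases hc : p + 1 ≤ t2
      · have ee2 : (σ.insertIdx p v).getD (p + 1) 0 = σ.getD p 0 := by
          rw [hg3 (p + 1) (by omega)]; simp only [Nat.add_sub_cancel]
        have ee3 : (σ.insertIdx p v).getD (t2 + 1) 0 = σ.getD t2 0 := by
          rw [hg3 (t2 + 1) (by omega)]; simp only [Nat.add_sub_cancel]
        rw [hg2, ee2, ee3]
        exact if_congr (by constructor <;> (rintro ⟨ha, hh⟩; exact ⟨by omega, hh⟩)) rfl rfl
      · rw [if_neg (by rintro ⟨c, -⟩; omega), if_neg (by rintro ⟨c, -⟩; omega)]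
  have hrow3 : ∑ t1 ∈ range m, F (emb p t1) p
      = ((range m).filter (fun t => t + 2 ≤ p ∧ P (σ.getD t 0) (σ.getD (t + 1) 0) v)).card := by
    rw [Finset.card_filter]
    apply Finset.sum_congr rfl
    intro t1 ht1
    rcases lt_or_ge t1 p with h | h
    · rw [emb_lt h]
      simp only [hF]
      by_cases hc : t1 + 2 ≤ p
      · rw [hg1 t1 (by omega), hg1 (t1 + 1) (by omega), hg2]
      · rw [if_neg (fun h' => hc h'.1), if_neg (fun h' => hc h'.1)]
    · rw [emb_ge h]
      simp only [hF]
      rw [if_neg (by rintro ⟨c, -⟩; omega), if_neg (by rintro ⟨c, -⟩; omega)]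
  have hrow4 : ∑ t1 ∈ (range m).erase (p - 1), ∑ t2 ∈ range m, F (emb p t1) (emb p t2)
      = ∑ t1 ∈ (range m).erase (p - 1), ∑ t2 ∈ range m, G t1 t2 := by
    apply Finset.sum_congr rfl
    intro t1 ht1
    have ht1' : t1 ≠ p - 1 ∧ t1 < m := by
      simpa only [Finset.mem_erase, mem_range] using ht1
    apply Finset.sum_congr rfl
    intro t2 ht2
    have ht2' : t2 < m := mem_range.mp ht2
    rcases lt_or_ge t1 p with h1 | h1
    · rw [emb_lt h1]
      rcases lt_or_ge t2 p with h2 | h2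
      · rw [emb_lt h2]
        simp only [hF, hG]
        rw [hg1 t1 (by omega), hg1 (t1 + 1) (by omega), hg1 t2 h2]
      · rw [emb_ge h2]
        simp only [hF, hG]
        rw [hg1 t1 (by omega), hg1 (t1 + 1) (by omega), hg3 (t2 + 1) (by omega)]
        simp only [Nat.add_sub_cancel]
        exact if_congr (by constructor <;> (rintro ⟨ha, hh⟩; exact ⟨by omega, hh⟩)) rfl rfl
    · rw [emb_ge h1]
      rcases lt_or_ge t2 p with h2 | h2
      · rw [emb_lt h2]
        simp only [hF, hG]
        rw [if_neg (by rintro ⟨c, -⟩; omega), if_neg (by rintro ⟨c, -⟩; omega)]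
      · rw [emb_ge h2]
        simp only [hF, hG]
        rw [hg3 (t1 + 1) (by omega), hg3 (t1 + 1 + 1) (by omega), hg3 (t2 + 1) (by omega)]
        simp only [Nat.add_sub_cancel]
        exact if_congr (by constructor <;> (rintro ⟨ha, hh⟩; exact ⟨by omega, hh⟩)) rfl rfl
  have hrowB : ∑ t2 ∈ range m, F (emb p (p - 1)) (emb p t2)
      = ((range m).filter (fun t => p ≤ t ∧ P (σ.getD (p - 1) 0) v (σ.getD t 0))).card := by
    rw [Finset.card_filter]
    apply Finset.sum_congr rfl
    intro t2 ht2
    have h0 : p - 1 < p := by omega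
    rw [emb_lt h0]
    have hsucc : p - 1 + 1 = p := by omega
    rcases lt_or_ge t2 p with h | h
    · rw [emb_lt h]
      simp only [hF]
      rw [if_neg (by rintro ⟨c, -⟩; omega), if_neg (by rintro ⟨c, -⟩; omega)]
    · rw [emb_ge h]
      simp only [hF]
      rw [hg1 (p - 1) h0, hsucc, hg2, hg3 (t2 + 1) (by omega)]
      simp only [Nat.add_sub_cancel]
      exact if_congr (by constructor <;> (rintro ⟨ha, hh⟩; exact ⟨by omega, hh⟩)) rfl rfl
  have hrowC : ∑ t2 ∈ range m, G (p - 1) t2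
      = ((range m).filter
          (fun t => p + 1 ≤ t ∧ P (σ.getD (p - 1) 0) (σ.getD p 0) (σ.getD t 0))).card := by
    rw [Finset.card_filter]
    apply Finset.sum_congr rfl
    intro t2 ht2
    simp only [hG]
    have hsucc : p - 1 + 1 = p := by omega
    rw [hsucc]
    exact if_congr (by constructor <;> (rintro ⟨ha, hh⟩; exact ⟨by omega, hh⟩)) rfl rfl
  omega


theorem des_insertIdx (σ : List ℕ) (p v : ℕ) (hp : 1 ≤ p) (hpm : p ≤ σ.length)
    (hv : ∀ t < σ.length, σ.getD t 0 < v) :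
    BS.des (σ.insertIdx p v)
      + (if p < σ.length ∧ σ.getD p 0 < σ.getD (p - 1) 0 then 1 else 0)
    = BS.des σ + (if p < σ.length then 1 else 0) := by
  set m := σ.length with hm
  have hg1 : ∀ q < p, (σ.insertIdx p v).getD q 0 = σ.getD q 0 :=
    fun q hq => getD_insertIdx_lt σ v p q hq hpm
  have hg2 : (σ.insertIdx p v).getD p 0 = v := getD_insertIdx_self σ v p hpm
  have hg3 : ∀ q, p < q → (σ.insertIdx p v).getD q 0 = σ.getD (q - 1) 0 :=
    fun q hq => getD_insertIdx_gt σ v p q hq hpm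
  have hlen : (σ.insertIdx p v).length = m + 1 := List.length_insertIdx_of_le_length hpm v
  have hm1 : 1 ≤ m := le_trans hp hpm
  set f : ℕ → ℕ := fun i =>
    if (σ.insertIdx p v).getD (i + 1) 0 < (σ.insertIdx p v).getD i 0 then 1 else 0 with hf
  set gs : ℕ → ℕ := fun i => if σ.getD (i + 1) 0 < σ.getD i 0 then 1 else 0 with hgs
  have hdesπ : BS.des (σ.insertIdx p v) = ∑ i ∈ range (m - 1 + 1), f i := by
    rw [BS.des, BS.desSet, Finset.card_filter, hlen]
    have : m + 1 - 1 = m - 1 + 1 := by omega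
    rw [this]
  have hdesσ : BS.des σ = ∑ i ∈ range (m - 1), gs i := by
    rw [BS.des, BS.desSet, Finset.card_filter]
  have e1 : ∑ i ∈ range (m - 1 + 1), f i
      = f (p - 1) + ∑ t ∈ range (m - 1), f (emb (p - 1) t) :=
    sum_split (m - 1) (p - 1) (by omega) f
  have hfp : f (p - 1) = 0 := by
    simp only [hf]
    have hsucc : p - 1 + 1 = p := by omega
    rw [hsucc, hg2, hg1 (p - 1) (by omega)]
    exact if_neg (by have := hv (p - 1) (by omega); omega)
  have hrow : ∀ t ∈ (range (m - 1)).erase (p - 1), f (emb (p - 1) t) = gs t := by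
    intro t ht
    have ht' : t ≠ p - 1 ∧ t < m - 1 := by
      simpa only [Finset.mem_erase, mem_range] using ht
    rcases lt_or_ge t (p - 1) with h | h
    · rw [emb_lt h]
      simp only [hf, hgs]
      rw [hg1 t (by omega), hg1 (t + 1) (by omega)]
    · rw [emb_ge h]
      simp only [hf, hgs]
      rw [hg3 (t + 1) (by omega), hg3 (t + 1 + 1) (by omega)]
      simp only [Nat.add_sub_cancel]
  rcases lt_or_ge p m with hpm' | hpm'
  · -- p < m
    have hmem : p - 1 ∈ range (m - 1) := by simp only [mem_range]; omega
    have e2 : f (emb (p - 1) (p - 1)) + ∑ t ∈ (range (m - 1)).erase (p - 1), f (emb (p - 1) t)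
        = ∑ t ∈ range (m - 1), f (emb (p - 1) t) :=
      Finset.add_sum_erase _ (fun t => f (emb (p - 1) t)) hmem
    have e3 : gs (p - 1) + ∑ t ∈ (range (m - 1)).erase (p - 1), gs t
        = ∑ t ∈ range (m - 1), gs t :=
      Finset.add_sum_erase _ gs hmem
    have e4 : ∑ t ∈ (range (m - 1)).erase (p - 1), f (emb (p - 1) t)
        = ∑ t ∈ (range (m - 1)).erase (p - 1), gs t :=
      Finset.sum_congr rfl hrow
    have e5 : f (emb (p - 1) (p - 1)) = 1 := by
      rw [emb_ge (le_refl (p - 1))]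
      simp only [hf]
      have hsucc : p - 1 + 1 = p := by omega
      rw [hsucc, hg2, hg3 (p + 1) (by omega)]
      simp only [Nat.add_sub_cancel]
      exact if_pos (hv p hpm')
    have e6 : gs (p - 1) = if σ.getD p 0 < σ.getD (p - 1) 0 then 1 else 0 := by
      simp only [hgs]
      have hsucc : p - 1 + 1 = p := by omega
      rw [hsucc]
    rw [if_pos hpm']
    by_cases hd : σ.getD p 0 < σ.getD (p - 1) 0
    · rw [if_pos ⟨hpm', hd⟩]
      rw [if_pos hd] at e6
      omega
    · rw [if_neg (by rintro ⟨-, c⟩; exact hd c)]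
      rw [if_neg hd] at e6
      omega
  · -- p = m
    have hpeq : p = m := by omega
    have e4 : ∑ t ∈ range (m - 1), f (emb (p - 1) t) = ∑ t ∈ range (m - 1), gs t := by
      apply Finset.sum_congr rfl
      intro t ht
      have ht' : t < m - 1 := mem_range.mp ht
      rw [emb_lt (by omega)]
      simp only [hf, hgs]
      rw [hg1 t (by omega), hg1 (t + 1) (by omega)]
    rw [if_neg (by omega), if_neg (by omega)]
    omega


/-- `des` equals the number of descent spaces. -/
lemma desEq (σ : List ℕ) :
    BS.des σ = ((range σ.length).filter (fun j => BS.isDescSpace σ j)).card := by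
  rw [BS.des, BS.desSet]
  apply Finset.card_bij (fun a _ => a + 1)
  · intro a ha
    simp only [Finset.mem_filter, mem_range] at ha ⊢
    refine ⟨by omega, by omega, by omega, ?_⟩
    simpa only [Nat.add_sub_cancel] using ha.2
  · intro a ha b hb h
    omega
  · intro b hb
    simp only [Finset.mem_filter, mem_range] at hb
    simp only [BS.isDescSpace] at hb
    obtain ⟨hbm, hb1, hbm', hbd⟩ := hb
    refine ⟨b - 1, ?_, by omega⟩
    simp only [Finset.mem_filter, mem_range]
    constructor
    · omega
    · have : b - 1 + 1 = b := by omega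
      rw [this]
      exact hbd
  
lemma card_desc_shift (σ : List ℕ) (v p : ℕ) (hpm : p ≤ σ.length)
    (hv : ∀ t < σ.length, σ.getD t 0 < v) :
    ((range σ.length).filter
      (fun t => t + 2 ≤ p ∧ (σ.getD (t + 1) 0 < σ.getD t 0 ∧ σ.getD t 0 < v))).card
    = ((range p).filter (fun j => BS.isDescSpace σ j)).card := by
  apply Finset.card_bij (fun a _ => a + 1)
  · intro a ha
    simp only [Finset.mem_filter, mem_range] at ha ⊢
    simp only [BS.isDescSpace] at ha ⊢
    refine ⟨by omega, by omega, by omega, ?_⟩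
    simpa only [Nat.add_sub_cancel] using ha.2.2.1
  · intro a ha b hb h
    omega
  · intro b hb
    simp only [Finset.mem_filter, mem_range] at hb
    simp only [BS.isDescSpace] at hb
    obtain ⟨hbp, hb1, hbm, hbd⟩ := hb
    refine ⟨b - 1, ?_, by omega⟩
    simp only [Finset.mem_filter, mem_range]
    have hb' : b - 1 + 1 = b := by omega
    refine ⟨by omega, by omega, ?_, hv (b - 1) (by omega)⟩
    rw [hb']
    exact hbd

lemma descCount_lt (σ : List ℕ) {p p' : ℕ} (hd : BS.isDescSpace σ p) (hlt : p < p') :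
    ((range p).filter (fun j => BS.isDescSpace σ j)).card
      < ((range p').filter (fun j => BS.isDescSpace σ j)).card := by
  apply Finset.card_lt_card
  have hsub : (range p).filter (fun j => BS.isDescSpace σ j)
      ⊆ (range p').filter (fun j => BS.isDescSpace σ j) :=
    Finset.filter_subset_filter _ (Finset.range_subset_range.2 (by omega))
  rw [Finset.ssubset_iff_of_subset hsub]
  exact ⟨p, Finset.mem_filter.2 ⟨mem_range.2 hlt, hd⟩,
    fun h => by simpa using (Finset.mem_filter.1 h).1⟩

lemma ascCount_lt (σ : List ℕ) {p p' : ℕ} (ha : BS.isAscSpace σ p) (hlt : p < p') :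
    ((Finset.Ico p' σ.length).filter (fun j => BS.isAscSpace σ j)).card
      < ((Finset.Ico p σ.length).filter (fun j => BS.isAscSpace σ j)).card := by
  apply Finset.card_lt_card
  have hsub : (Finset.Ico p' σ.length).filter (fun j => BS.isAscSpace σ j)
      ⊆ (Finset.Ico p σ.length).filter (fun j => BS.isAscSpace σ j) :=
    Finset.filter_subset_filter _ (Finset.Ico_subset_Ico (by omega) le_rfl)
  rw [Finset.ssubset_iff_of_subset hsub]
  refine ⟨p, Finset.mem_filter.2 ⟨Finset.mem_Ico.2 ⟨le_rfl, ha.2.1⟩, ha⟩, fun h => ?_⟩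
  have := (Finset.mem_Ico.1 (Finset.mem_filter.1 h).1).1
  omega

lemma des_Ico (σ : List ℕ) :
    BS.des σ = ((Finset.Ico 1 σ.length).filter (fun j => BS.isDescSpace σ j)).card := by
  rw [desEq]
  congr 1
  ext j
  simp only [Finset.mem_filter, mem_range, Finset.mem_Ico]
  simp only [BS.isDescSpace]
  constructor
  · rintro ⟨h1, h2⟩; exact ⟨⟨h2.1, h1⟩, h2⟩
  · rintro ⟨h1, h2⟩; exact ⟨h1.2, h2⟩

lemma des_add_asc_le (σ : List ℕ) :
    BS.des σ + ((Finset.Ico 1 σ.length).filter (fun j => BS.isAscSpace σ j)).card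
      ≤ σ.length - 1 := by
  rw [des_Ico]
  have hdisj : Disjoint ((Finset.Ico 1 σ.length).filter (fun j => BS.isDescSpace σ j))
      ((Finset.Ico 1 σ.length).filter (fun j => BS.isAscSpace σ j)) := by
    rw [Finset.disjoint_left]
    intro a ha hb
    have h1 := (Finset.mem_filter.1 ha).2
    have h2 := (Finset.mem_filter.1 hb).2
    exact absurd h2.2.2 (by have := h1.2.2; omega)
  calc ((Finset.Ico 1 σ.length).filter (fun j => BS.isDescSpace σ j)).card
        + ((Finset.Ico 1 σ.length).filter (fun j => BS.isAscSpace σ j)).card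
      = (((Finset.Ico 1 σ.length).filter (fun j => BS.isDescSpace σ j))
          ∪ ((Finset.Ico 1 σ.length).filter (fun j => BS.isAscSpace σ j))).card :=
        (Finset.card_union_of_disjoint hdisj).symm
    _ ≤ (Finset.Ico 1 σ.length).card :=
        Finset.card_le_card (Finset.union_subset (Finset.filter_subset _ _)
          (Finset.filter_subset _ _))
    _ = σ.length - 1 := by rw [Nat.card_Ico]

lemma desc_range_split (σ : List ℕ) (p : ℕ) (hpm : p ≤ σ.length) :
    ((range p).filter (fun j => BS.isDescSpace σ j)).card
      + ((Finset.Ico p σ.length).filter (fun j => BS.isDescSpace σ j)).card = BS.des σ := by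
  rw [desEq]
  have : range σ.length = range p ∪ Finset.Ico p σ.length := by
    ext j
    simp only [mem_range, Finset.mem_union, Finset.mem_Ico]
    omega
  rw [this, Finset.filter_union]
  rw [Finset.card_union_of_disjoint]
  apply Finset.disjoint_filter_filter
  rw [Finset.range_eq_Ico]
  exact Finset.Ico_disjoint_Ico_consecutive 0 p σ.length

lemma desc_asc_split (σ : List ℕ) (p : ℕ) (hp : 1 ≤ p) (hpm : p ≤ σ.length)
    (hne : ∀ s t, s < σ.length → t < σ.length → s ≠ t → σ.getD s 0 ≠ σ.getD t 0) :
    ((Finset.Ico p σ.length).filter (fun j => BS.isDescSpace σ j)).card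
      + ((Finset.Ico p σ.length).filter (fun j => BS.isAscSpace σ j)).card
      = σ.length - p := by
  have h1 : ((Finset.Ico p σ.length).filter (fun j => ¬ BS.isDescSpace σ j))
      = ((Finset.Ico p σ.length).filter (fun j => BS.isAscSpace σ j)) := by
    apply Finset.filter_congr
    intro j hj
    obtain ⟨hj1, hj2⟩ := Finset.mem_Ico.1 hj
    have hnej : σ.getD j 0 ≠ σ.getD (j - 1) 0 :=
      hne j (j - 1) hj2 (by omega) (by omega)
    simp only [BS.isDescSpace, BS.isAscSpace]
    constructor
    · intro h
      refine ⟨by omega, hj2, ?_⟩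
      have : ¬ σ.getD j 0 < σ.getD (j - 1) 0 := fun hc => h ⟨by omega, hj2, hc⟩
      omega
    · rintro ⟨-, -, h3⟩ ⟨-, -, h4⟩
      omega
  rw [← h1, Finset.card_filter_add_card_filter_not, Nat.card_Ico]


lemma statLabel_class (σ : List ℕ)
    (hne : ∀ s t, s < σ.length → t < σ.length → s ≠ t → σ.getD s 0 ≠ σ.getD t 0)
    (j : ℕ) (hj : j ≤ σ.length) :
    (j = σ.length ∧ BS.statLabel σ j = BS.des σ) ∨
    (j < σ.length ∧ BS.isDescSpace σ j ∧
      BS.statLabel σ j = ((range j).filter (fun t => BS.isDescSpace σ t)).card ∧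
      BS.statLabel σ j < BS.des σ) ∨
    (j = 0 ∧ j < σ.length ∧ BS.statLabel σ j = BS.des σ + 1) ∨
    (1 ≤ j ∧ j < σ.length ∧ BS.isAscSpace σ j ∧
      BS.statLabel σ j = BS.des σ + 1
        + ((Finset.Ico j σ.length).filter (fun t => BS.isAscSpace σ t)).card ∧
      BS.des σ + 2 ≤ BS.statLabel σ j) := by
  by_cases hjm : j = σ.length
  · left
    refine ⟨hjm, ?_⟩
    rw [BS.statLabel, if_pos hjm]
  · have hjm' : j < σ.length := by omega
    by_cases hdesc : BS.isDescSpace σ j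
    · right; left
      have heq : BS.statLabel σ j
          = ((range j).filter (fun t => BS.isDescSpace σ t)).card := by
        rw [BS.statLabel, if_neg hjm, if_pos hdesc]
      refine ⟨hjm', hdesc, heq, ?_⟩
      rw [heq, desEq]
      exact descCount_lt σ hdesc hjm'
    · by_cases hj0 : j = 0
      · right; right; left
        refine ⟨hj0, hjm', ?_⟩
        rw [BS.statLabel, if_neg hjm, if_neg hdesc, if_pos hj0]
      · right; right; right
        have hasc : BS.isAscSpace σ j := by
          have hnej : σ.getD j 0 ≠ σ.getD (j - 1) 0 :=
            hne j (j - 1) hjm' (by omega) (by omega)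
          have : ¬ σ.getD j 0 < σ.getD (j - 1) 0 :=
            fun hc => hdesc ⟨by omega, hjm', hc⟩
          exact ⟨by omega, hjm', by omega⟩
        have heq : BS.statLabel σ j = BS.des σ + 1
            + ((Finset.Ico j σ.length).filter (fun t => BS.isAscSpace σ t)).card := by
          rw [BS.statLabel, if_neg hjm, if_neg hdesc, if_neg hj0]
        refine ⟨by omega, hjm', hasc, heq, ?_⟩
        have hpos : 0 < ((Finset.Ico j σ.length).filter (fun t => BS.isAscSpace σ t)).card :=
          Finset.card_pos.2 ⟨j, Finset.mem_filter.2 ⟨Finset.mem_Ico.2 ⟨le_rfl, hjm'⟩, hasc⟩⟩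
        omega

lemma statLabel_le (σ : List ℕ)
    (hne : ∀ s t, s < σ.length → t < σ.length → s ≠ t → σ.getD s 0 ≠ σ.getD t 0)
    (j : ℕ) (hj : j ≤ σ.length) : BS.statLabel σ j ≤ σ.length := by
  have hD : BS.des σ ≤ σ.length - 1 := by
    have := des_add_asc_le σ
    omega
  rcases statLabel_class σ hne j hj with ⟨h1, h2⟩ | ⟨h1, h2, h3, h4⟩ | ⟨h1, h2, h3⟩ |
    ⟨h1, h2, h3, h4, h5⟩
  · omega
  · omega
  · omega
  · have hle : ((Finset.Ico j σ.length).filter (fun t => BS.isAscSpace σ t)).card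
        ≤ ((Finset.Ico 1 σ.length).filter (fun t => BS.isAscSpace σ t)).card :=
      Finset.card_le_card
        (Finset.filter_subset_filter _ (Finset.Ico_subset_Ico h1 le_rfl))
    have := des_add_asc_le σ
    omega

lemma statLabel_exists (σ : List ℕ)
    (hne : ∀ s t, s < σ.length → t < σ.length → s ≠ t → σ.getD s 0 ≠ σ.getD t 0)
    (i : ℕ) (hi : i ≤ σ.length) : ∃ j, j ≤ σ.length ∧ BS.statLabel σ j = i := by
  have hsurj := Finset.surj_on_of_inj_on_of_card_le
    (s := range (σ.length + 1)) (t := range (σ.length + 1))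
    (fun a _ => BS.statLabel σ a)
    (fun a ha => by
      show BS.statLabel σ a ∈ range (σ.length + 1)
      have := statLabel_le σ hne a (by have := mem_range.1 ha; omega)
      exact mem_range.2 (by omega))
    (fun a₁ a₂ ha₁ ha₂ heq => by
      have heq' : BS.statLabel σ a₁ = BS.statLabel σ a₂ := heq
      clear heq
      have h1 : a₁ ≤ σ.length := by have := mem_range.1 ha₁; omega
      have h2 : a₂ ≤ σ.length := by have := mem_range.1 ha₂; omega
      rcases statLabel_class σ hne a₁ h1 with ⟨c1, d1⟩ | ⟨c1, e1, d1, f1⟩ | ⟨c1, g1, d1⟩ |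
        ⟨c1, g1, e1, d1, f1⟩ <;>
        rcases statLabel_class σ hne a₂ h2 with ⟨c2, d2⟩ | ⟨c2, e2, d2, f2⟩ | ⟨c2, g2, d2⟩ |
          ⟨c2, g2, e2, d2, f2⟩
      · omega
      · omega
      · omega
      · omega
      · omega
      · -- desc desc
        rcases lt_trichotomy a₁ a₂ with hlt | heqq | hgt
        · have := descCount_lt σ e1 hlt; omega
        · exact heqq
        · have := descCount_lt σ e2 hgt; omega
      · omega
      · omega
      · omega
      · omega
      · omega
      · omega
      · omega
      · omega
      · omega
      · -- asc asc
        rcases lt_trichotomy a₁ a₂ with hlt | heqq | hgt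
        · have := ascCount_lt σ e1 hlt; omega
        · exact heqq
        · have := ascCount_lt σ e2 hgt; omega)
    le_rfl i (mem_range.2 (by omega))
  obtain ⟨a, ha, haeq⟩ := hsurj
  have haeq' : i = BS.statLabel σ a := haeq
  exact ⟨a, by have := mem_range.1 ha; omega, haeq'.symm⟩

lemma spaceOfLabel_spec (σ : List ℕ) (i : ℕ)
    (hex : ∃ j, j ≤ σ.length ∧ BS.statLabel σ j = i) :
    BS.spaceOfLabel BS.statLabel σ i ≤ σ.length ∧
      BS.statLabel σ (BS.spaceOfLabel BS.statLabel σ i) = i := by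
  obtain ⟨j0, hj0, hj0'⟩ := hex
  rw [BS.spaceOfLabel]
  cases hfind : (List.range (σ.length + 1)).find? (fun j => decide (BS.statLabel σ j = i)) with
  | none =>
    exfalso
    have := List.find?_eq_none.mp hfind j0 (List.mem_range.mpr (by omega))
    simp only [decide_eq_true_eq] at this
    exact this hj0'
  | some j =>
    have h1 := List.find?_some hfind
    have h2 := List.mem_of_find?_eq_some hfind
    simp only [decide_eq_true_eq] at h1
    rw [List.mem_range] at h2
    exact ⟨by simpa using Nat.lt_succ_iff.mp h2, by simpa using h1⟩


lemma acb_eq (l : List ℕ) : BS.acb l = cnt (fun a b c => a < c ∧ c < b) l := by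
  unfold BS.acb cnt
  exact congrArg Finset.card (Finset.filter_congr fun x _ => Iff.rfl)

lemma bac_eq (l : List ℕ) : BS.bac l = cnt (fun a b c => b < a ∧ a < c) l := by
  unfold BS.bac cnt
  exact congrArg Finset.card (Finset.filter_congr fun x _ => Iff.rfl)

lemma cba_eq (l : List ℕ) : BS.cba l = cnt (fun a b c => c < b ∧ b < a) l := by
  unfold BS.cba cnt
  exact congrArg Finset.card (Finset.filter_congr fun x _ => Iff.rfl)

lemma stat_core (σ : List ℕ) (p n : ℕ) (hp1 : 1 ≤ p) (hple : p ≤ σ.length)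
    (hval : ∀ t, t < σ.length → σ.getD t 0 < n) :
    BS.stat (σ.insertIdx p n)
      + ((range σ.length).filter (fun t => p + 1 ≤ t ∧
          (σ.getD (p - 1) 0 < σ.getD t 0 ∧ σ.getD t 0 < σ.getD p 0))).card
      + ((range σ.length).filter (fun t => p + 1 ≤ t ∧
          (σ.getD p 0 < σ.getD (p - 1) 0 ∧ σ.getD (p - 1) 0 < σ.getD t 0))).card
      + ((range σ.length).filter (fun t => p + 1 ≤ t ∧
          (σ.getD t 0 < σ.getD p 0 ∧ σ.getD p 0 < σ.getD (p - 1) 0))).card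
      + (if p < σ.length ∧ σ.getD p 0 < σ.getD (p - 1) 0 then 1 else 0)
    = BS.stat σ
      + ((range σ.length).filter (fun t => p ≤ t ∧
          (σ.getD (p - 1) 0 < σ.getD t 0 ∧ σ.getD t 0 < n))).card
      + ((range σ.length).filter (fun t => p + 1 ≤ t ∧
          (σ.getD t 0 < σ.getD p 0 ∧ σ.getD p 0 < n))).card
      + ((range p).filter (fun t => BS.isDescSpace σ t)).card
      + (if p < σ.length then 1 else 0) := by
  have Hacb := cnt_insertIdx σ p n (fun a b c => a < c ∧ c < b) hp1 hple
  rw [← acb_eq, ← acb_eq] at Hacb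
  have Hbac := cnt_insertIdx σ p n (fun a b c => b < a ∧ a < c) hp1 hple
  rw [← bac_eq, ← bac_eq] at Hbac
  have Hcba := cnt_insertIdx σ p n (fun a b c => c < b ∧ b < a) hp1 hple
  rw [← cba_eq, ← cba_eq] at Hcba
  beta_reduce at Hacb Hbac Hcba
  have Hdes := des_insertIdx σ p n hp1 hple hval
  have hA3 : ((range σ.length).filter
      (fun t => p + 1 ≤ t ∧ (n < σ.getD t 0 ∧ σ.getD t 0 < σ.getD p 0))).card = 0 := by
    rw [Finset.card_eq_zero, Finset.filter_eq_empty_iff]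
    intro t ht
    rintro ⟨-, h1, -⟩
    have := hval t (mem_range.1 ht); omega
  have hA4 : ((range σ.length).filter
      (fun t => t + 2 ≤ p ∧ (σ.getD t 0 < n ∧ n < σ.getD (t + 1) 0))).card = 0 := by
    rw [Finset.card_eq_zero, Finset.filter_eq_empty_iff]
    intro t ht
    rintro ⟨h0, -, h2⟩
    have := hval (t + 1) (by omega); omega
  have hB2 : ((range σ.length).filter
      (fun t => p ≤ t ∧ (n < σ.getD (p - 1) 0 ∧ σ.getD (p - 1) 0 < σ.getD t 0))).card = 0 := by
    rw [Finset.card_eq_zero, Finset.filter_eq_empty_iff]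
    intro t ht
    rintro ⟨-, h1, -⟩
    have := hval (p - 1) (by omega); omega
  have hB3 : ((range σ.length).filter
      (fun t => p + 1 ≤ t ∧ (σ.getD p 0 < n ∧ n < σ.getD t 0))).card = 0 := by
    rw [Finset.card_eq_zero, Finset.filter_eq_empty_iff]
    intro t ht
    rintro ⟨-, -, h2⟩
    have := hval t (mem_range.1 ht); omega
  have hC2 : ((range σ.length).filter
      (fun t => p ≤ t ∧ (σ.getD t 0 < n ∧ n < σ.getD (p - 1) 0))).card = 0 := by
    rw [Finset.card_eq_zero, Finset.filter_eq_empty_iff]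
    intro t ht
    rintro ⟨-, -, h2⟩
    have := hval (p - 1) (by omega); omega
  have hC4 : ((range σ.length).filter
      (fun t => t + 2 ≤ p ∧ (n < σ.getD (t + 1) 0 ∧ σ.getD (t + 1) 0 < σ.getD t 0))).card
      = 0 := by
    rw [Finset.card_eq_zero, Finset.filter_eq_empty_iff]
    intro t ht
    rintro ⟨h0, h1, -⟩
    have := hval (t + 1) (by omega); omega
  have hB4 := card_desc_shift σ n p hple hval
  simp only [BS.stat]
  omega

lemma stat_case_end (σ : List ℕ) (n : ℕ) (hm0 : 1 ≤ σ.length)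
    (hval : ∀ t, t < σ.length → σ.getD t 0 < n) :
    BS.stat (σ.insertIdx σ.length n) = BS.stat σ + BS.des σ := by
  have hcore := stat_core σ σ.length n hm0 le_rfl hval
  have hz : ∀ (Q : ℕ → Prop) (_ : DecidablePred Q),
      ((range σ.length).filter (fun t => σ.length + 1 ≤ t ∧ Q t)).card = 0 := by
    intro Q hQ
    rw [Finset.card_eq_zero, Finset.filter_eq_empty_iff]
    intro t ht
    rintro ⟨h0, -⟩
    have := mem_range.1 ht; omega
  have hz2 : ∀ (Q : ℕ → Prop) (_ : DecidablePred Q),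
      ((range σ.length).filter (fun t => σ.length ≤ t ∧ Q t)).card = 0 := by
    intro Q hQ
    rw [Finset.card_eq_zero, Finset.filter_eq_empty_iff]
    intro t ht
    rintro ⟨h0, -⟩
    have := mem_range.1 ht; omega
  rw [hz _ _, hz _ _, hz _ _, hz2 _ _, hz _ _, if_neg (by omega), if_neg (by omega),
    ← desEq] at hcore
  omega

lemma stat_case_desc (σ : List ℕ) (n p : ℕ) (hdesc : BS.isDescSpace σ p)
    (hval : ∀ t, t < σ.length → σ.getD t 0 < n) :
    BS.stat (σ.insertIdx p n)
      = BS.stat σ + ((range p).filter (fun t => BS.isDescSpace σ t)).card := by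
  obtain ⟨hp1, hpm', hd⟩ := hdesc
  have hcore := stat_core σ p n hp1 (le_of_lt hpm') hval
  have hA1 : ((range σ.length).filter (fun t => p + 1 ≤ t ∧
      (σ.getD (p - 1) 0 < σ.getD t 0 ∧ σ.getD t 0 < σ.getD p 0))).card = 0 := by
    rw [Finset.card_eq_zero, Finset.filter_eq_empty_iff]
    intro t ht
    rintro ⟨-, h1, h2⟩
    omega
  have hA2B1 : ((range σ.length).filter (fun t => p ≤ t ∧
        (σ.getD (p - 1) 0 < σ.getD t 0 ∧ σ.getD t 0 < n))).card
      = ((range σ.length).filter (fun t => p + 1 ≤ t ∧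
        (σ.getD p 0 < σ.getD (p - 1) 0 ∧ σ.getD (p - 1) 0 < σ.getD t 0))).card := by
    apply congrArg Finset.card
    apply Finset.filter_congr
    intro t ht
    have hvt := hval t (mem_range.1 ht)
    constructor
    · rintro ⟨h1, h2, h3⟩
      refine ⟨?_, hd, h2⟩
      by_contra hc
      have htp : t = p := by omega
      rw [htp] at h2
      omega
    · rintro ⟨h1, h2, h3⟩
      exact ⟨by omega, h3, hvt⟩
  have hC1C3 : ((range σ.length).filter (fun t => p + 1 ≤ t ∧
        (σ.getD t 0 < σ.getD p 0 ∧ σ.getD p 0 < σ.getD (p - 1) 0))).card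
      = ((range σ.length).filter (fun t => p + 1 ≤ t ∧
        (σ.getD t 0 < σ.getD p 0 ∧ σ.getD p 0 < n))).card := by
    apply congrArg Finset.card
    apply Finset.filter_congr
    intro t ht
    have hvp := hval p hpm'
    constructor
    · rintro ⟨h1, h2, h3⟩; exact ⟨h1, h2, by omega⟩
    · rintro ⟨h1, h2, h3⟩; exact ⟨h1, h2, hd⟩
  rw [if_pos ⟨hpm', hd⟩, if_pos hpm'] at hcore
  omega

lemma stat_case_asc (σ : List ℕ) (n p : ℕ) (hasc : BS.isAscSpace σ p)
    (hval : ∀ t, t < σ.length → σ.getD t 0 < n)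
    (hne : ∀ s t, s < σ.length → t < σ.length → s ≠ t → σ.getD s 0 ≠ σ.getD t 0) :
    BS.stat (σ.insertIdx p n)
      = BS.stat σ + (BS.des σ + 1
          + ((Finset.Ico p σ.length).filter (fun t => BS.isAscSpace σ t)).card) := by
  obtain ⟨hp1, hpm', ha⟩ := hasc
  have hcore := stat_core σ p n hp1 (le_of_lt hpm') hval
  have hB1 : ((range σ.length).filter (fun t => p + 1 ≤ t ∧
      (σ.getD p 0 < σ.getD (p - 1) 0 ∧ σ.getD (p - 1) 0 < σ.getD t 0))).card = 0 := by
    rw [Finset.card_eq_zero, Finset.filter_eq_empty_iff]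
    intro t ht
    rintro ⟨-, h1, -⟩
    omega
  have hC1 : ((range σ.length).filter (fun t => p + 1 ≤ t ∧
      (σ.getD t 0 < σ.getD p 0 ∧ σ.getD p 0 < σ.getD (p - 1) 0))).card = 0 := by
    rw [Finset.card_eq_zero, Finset.filter_eq_empty_iff]
    intro t ht
    rintro ⟨-, -, h2⟩
    omega
  rw [if_neg (by rintro ⟨-, hc⟩; omega), if_pos hpm'] at hcore
  -- A2 = SB + 1
  have hA2 : ((range σ.length).filter (fun t => p ≤ t ∧
        (σ.getD (p - 1) 0 < σ.getD t 0 ∧ σ.getD t 0 < n))).card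
      = ((range σ.length).filter
          (fun t => p + 1 ≤ t ∧ σ.getD (p - 1) 0 < σ.getD t 0)).card + 1 := by
    have hset : (range σ.length).filter (fun t => p ≤ t ∧
          (σ.getD (p - 1) 0 < σ.getD t 0 ∧ σ.getD t 0 < n))
        = insert p ((range σ.length).filter
            (fun t => p + 1 ≤ t ∧ σ.getD (p - 1) 0 < σ.getD t 0)) := by
      ext t
      simp only [Finset.mem_insert, Finset.mem_filter, mem_range]
      constructor
      · rintro ⟨htm, h1, h2, h3⟩
        by_cases htp : t = p
        · exact Or.inl htp
        · exact Or.inr ⟨htm, by omega, h2⟩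
      · rintro (htp | ⟨htm, h1, h2⟩)
        · subst htp
          exact ⟨hpm', le_rfl, ha, hval t hpm'⟩
        · exact ⟨htm, by omega, h2, hval t htm⟩
    rw [hset, Finset.card_insert_of_notMem (by
      simp only [Finset.mem_filter, mem_range]
      rintro ⟨-, hc, -⟩
      omega)]
  -- SB = A1 + SQ
  have hSB : ((range σ.length).filter (fun t => p + 1 ≤ t ∧
          (σ.getD (p - 1) 0 < σ.getD t 0 ∧ σ.getD t 0 < σ.getD p 0))).card
      + ((range σ.length).filter (fun t => p + 1 ≤ t ∧ σ.getD p 0 < σ.getD t 0)).card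
      = ((range σ.length).filter
          (fun t => p + 1 ≤ t ∧ σ.getD (p - 1) 0 < σ.getD t 0)).card := by
    have hpart := Finset.card_filter_add_card_filter_not
      (s := (range σ.length).filter (fun t => p + 1 ≤ t ∧ σ.getD (p - 1) 0 < σ.getD t 0))
      (fun t => σ.getD t 0 < σ.getD p 0)
    rw [Finset.filter_filter, Finset.filter_filter] at hpart
    have e1 : (range σ.length).filter
          (fun t => (p + 1 ≤ t ∧ σ.getD (p - 1) 0 < σ.getD t 0) ∧ σ.getD t 0 < σ.getD p 0)
        = (range σ.length).filter (fun t => p + 1 ≤ t ∧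
          (σ.getD (p - 1) 0 < σ.getD t 0 ∧ σ.getD t 0 < σ.getD p 0)) := by
      apply Finset.filter_congr
      intro t ht
      constructor
      · rintro ⟨⟨h1, h2⟩, h3⟩; exact ⟨h1, h2, h3⟩
      · rintro ⟨h1, h2, h3⟩; exact ⟨⟨h1, h2⟩, h3⟩
    have e2 : (range σ.length).filter
          (fun t => (p + 1 ≤ t ∧ σ.getD (p - 1) 0 < σ.getD t 0) ∧ ¬ σ.getD t 0 < σ.getD p 0)
        = (range σ.length).filter (fun t => p + 1 ≤ t ∧ σ.getD p 0 < σ.getD t 0) := by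
      apply Finset.filter_congr
      intro t ht
      constructor
      · rintro ⟨⟨h1, h2⟩, h3⟩
        have hnet : σ.getD t 0 ≠ σ.getD p 0 :=
          hne t p (mem_range.1 ht) hpm' (by omega)
        exact ⟨h1, by omega⟩
      · rintro ⟨h1, h2⟩
        exact ⟨⟨h1, by omega⟩, by omega⟩
    rw [e1, e2] at hpart
    exact hpart
  -- SQ + C3 = m - (p+1)
  have hT : ((range σ.length).filter (fun t => p + 1 ≤ t ∧ σ.getD p 0 < σ.getD t 0)).card
      + ((range σ.length).filter (fun t => p + 1 ≤ t ∧
          (σ.getD t 0 < σ.getD p 0 ∧ σ.getD p 0 < n))).card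
      = σ.length - (p + 1) := by
    have hpart := Finset.card_filter_add_card_filter_not
      (s := (range σ.length).filter (fun t => p + 1 ≤ t))
      (fun t => σ.getD p 0 < σ.getD t 0)
    rw [Finset.filter_filter, Finset.filter_filter] at hpart
    have e1 : (range σ.length).filter (fun t => p + 1 ≤ t ∧ σ.getD p 0 < σ.getD t 0)
        = (range σ.length).filter (fun t => (p + 1 ≤ t) ∧ σ.getD p 0 < σ.getD t 0) := rfl
    have e2 : (range σ.length).filter
          (fun t => (p + 1 ≤ t) ∧ ¬ σ.getD p 0 < σ.getD t 0)
        = (range σ.length).filter (fun t => p + 1 ≤ t ∧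
          (σ.getD t 0 < σ.getD p 0 ∧ σ.getD p 0 < n)) := by
      apply Finset.filter_congr
      intro t ht
      have hvp := hval p hpm'
      constructor
      · rintro ⟨h1, h2⟩
        have hnet : σ.getD t 0 ≠ σ.getD p 0 :=
          hne t p (mem_range.1 ht) hpm' (by omega)
        exact ⟨h1, by omega, hvp⟩
      · rintro ⟨h1, h2, h3⟩
        exact ⟨h1, by omega⟩
    have e3 : (range σ.length).filter (fun t => p + 1 ≤ t) = Finset.Ico (p + 1) σ.length := by
      ext t
      simp only [Finset.mem_filter, mem_range, Finset.mem_Ico]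
      omega
    rw [e2, e3, Nat.card_Ico] at hpart
    exact hpart
  have hsplit1 := desc_range_split σ p (le_of_lt hpm')
  have hsplit2 := desc_asc_split σ p hp1 (le_of_lt hpm') hne
  omega

lemma stat_nil : BS.stat ([] : List ℕ) = 0 := rfl

lemma stat_single (x : ℕ) : BS.stat [x] = 0 := by
  have hz : ∀ (Q : ℕ × ℕ → Prop) (_ : DecidablePred Q),
      ((range 1 ×ˢ range 1).filter (fun q => q.1 + 2 ≤ q.2 ∧ Q q)).card = 0 := by
    intro Q hQ
    rw [Finset.card_eq_zero, Finset.filter_eq_empty_iff]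
    intro q hq
    rw [Finset.mem_product] at hq
    rintro ⟨h0, -⟩
    have h1 := mem_range.1 hq.1
    have h2 := mem_range.1 hq.2
    omega
  have h1 : BS.acb [x] = 0 := hz _ _
  have h2 : BS.bac [x] = 0 := hz _ _
  have h3 : BS.cba [x] = 0 := hz _ _
  have h4 : BS.des [x] = 0 := by
    rw [BS.des, BS.desSet]
    simp
  simp only [BS.stat, h1, h2, h3, h4]

end StatAux

/-- for i ∈ {0,…,des σ} ∪ {des σ + 2,…,n-1}, inserting `n` at the
space with stat-label `i` adds `i` to stat. -/
theorem stat_insertAtStatLabel (n : ℕ) (σ : List ℕ) (i : ℕ)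
    (hn : 1 ≤ n) (hσ : BS.isPerm σ (n - 1))
    (hi : i ≤ BS.des σ ∨ (BS.des σ + 2 ≤ i ∧ i ≤ n - 1)) :
    BS.stat (BS.insertAtStatLabel i σ n) = BS.stat σ + i := by
  open StatAux Finset in
  have hlen : σ.length = n - 1 := by
    have h := hσ.length_eq
    simpa using h
  have hnd : σ.Nodup := by
    refine hσ.nodup_iff.mpr ?_
    exact List.Nodup.map (fun a b hab => by omega) List.nodup_range
  have hval : ∀ t, t < σ.length → σ.getD t 0 < n := by
    intro t ht
    have hmem : σ.getD t 0 ∈ σ := by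
      rw [List.getD_eq_getElem _ _ ht]
      exact List.getElem_mem _
    have hmem2 := hσ.mem_iff.mp hmem
    simp only [List.mem_map, List.mem_range] at hmem2
    obtain ⟨a, haa, haeq⟩ := hmem2
    omega
  have hne : ∀ s t, s < σ.length → t < σ.length → s ≠ t → σ.getD s 0 ≠ σ.getD t 0 := by
    intro s t hs ht hst
    rw [List.getD_eq_getElem _ _ hs, List.getD_eq_getElem _ _ ht]
    intro h
    exact hst ((List.Nodup.getElem_inj_iff hnd).mp h)
  rcases Nat.eq_zero_or_pos σ.length with hm0 | hm0
  · have hσnil : σ = [] := List.length_eq_zero_iff.mp hm0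
    subst hσnil
    have hD : BS.des ([] : List ℕ) = 0 := rfl
    have hi0 : i = 0 := by
      rcases hi with h | h
      · omega
      · omega
    subst hi0
    have hsp := spaceOfLabel_spec [] 0 ⟨0, by simp, by rw [BS.statLabel]; simp [hD]⟩
    have hp : BS.spaceOfLabel BS.statLabel [] 0 = 0 := by omega
    rw [BS.insertAtStatLabel, hp]
    show BS.stat [n] = BS.stat ([] : List ℕ) + 0
    rw [stat_single, stat_nil]
  · have hD_le : BS.des σ ≤ σ.length - 1 := by
      have := des_add_asc_le σ
      omega
    have hi_le : i ≤ σ.length := by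
      rcases hi with h | h
      · omega
      · omega
    obtain ⟨hple, hpl⟩ := spaceOfLabel_spec σ i (statLabel_exists σ hne i hi_le)
    have hins : BS.insertAtStatLabel i σ n
        = σ.insertIdx (BS.spaceOfLabel BS.statLabel σ i) n := rfl
    rw [hins]
    rcases statLabel_class σ hne (BS.spaceOfLabel BS.statLabel σ i) hple with
      ⟨hpm', hlab⟩ | ⟨hpm', hdesc, hlab, hlab'⟩ | ⟨hp0, hpm', hlab⟩ |
      ⟨hp1, hpm', hasc, hlab, hlab'⟩
    · rw [hpm', stat_case_end σ n hm0 hval]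
      omega
    · rw [stat_case_desc σ n _ hdesc hval]
      omega
    · exfalso
      rcases hi with h | h <;> omega
    · rw [stat_case_asc σ n _ hasc hval hne]
      omega
end

section
/- If σ ∈ S_{n-1} and π is obtained from σ by appending n at the end (π = σn), then stat(π) = stat(σ) + des(σ). -/
/-! Appending a letter `x` larger than every letter of `σ` creates no new descent, and no new
occurrence of ac-b or cb-a, since in both patterns the last letter is smaller than the middle one.
The new occurrences of ba-c are exactly the triples `σᵢ σᵢ₊₁ x` with `σᵢ > σᵢ₊₁`, one for each
descent of `σ`. -/

namespace BS

def adjPatternCount (P : ℕ → ℕ → ℕ → Prop) [∀ a b c, Decidable (P a b c)] (l : List ℕ) : ℕ :=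
  ((Finset.range l.length ×ˢ Finset.range l.length).filter
    (fun p => p.1 + 2 ≤ p.2 ∧ P (l.getD p.1 0) (l.getD (p.1 + 1) 0) (l.getD p.2 0))).card

theorem acb_eq_adjPatternCount (l : List ℕ) :
    acb l = adjPatternCount (fun a b c => a < c ∧ c < b) l := rfl

theorem bac_eq_adjPatternCount (l : List ℕ) :
    bac l = adjPatternCount (fun a b c => b < a ∧ a < c) l := rfl

theorem cba_eq_adjPatternCount (l : List ℕ) :
    cba l = adjPatternCount (fun a b c => c < b ∧ b < a) l := rfl

theorem getD_append_singleton_of_lt (l : List ℕ) (x : ℕ) {i : ℕ} (hi : i < l.length) :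
    (l ++ [x]).getD i 0 = l.getD i 0 :=
  List.getD_append _ _ _ _ hi

theorem getD_append_singleton_length (l : List ℕ) (x : ℕ) :
    (l ++ [x]).getD l.length 0 = x := by
  simp

theorem getD_mem (l : List ℕ) {i : ℕ} (hi : i < l.length) : l.getD i 0 ∈ l := by
  rw [List.getD_eq_getElem l 0 hi]
  exact List.getElem_mem hi

open Finset in
theorem adjPatternCount_append_singleton (P : ℕ → ℕ → ℕ → Prop) [∀ a b c, Decidable (P a b c)]
    (l : List ℕ) (x : ℕ) :
    adjPatternCount P (l ++ [x]) = adjPatternCount P l +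
      ((range (l.length - 1)).filter (fun i => P (l.getD i 0) (l.getD (i + 1) 0) x)).card := by
  unfold adjPatternCount
  rw [← card_image_of_injective (filter _ (range (l.length - 1)))
    (Prod.mk_left_injective l.length), ← card_union_of_disjoint]
  · congr 1
    ext ⟨i, j⟩
    simp only [mem_filter, mem_product, mem_range, mem_union, mem_image, List.length_append,
      List.length_singleton, Prod.mk.injEq]
    rcases lt_or_ge j l.length with hj | hj
    · constructor
      · rintro ⟨-, hij, hP⟩
        rw [getD_append_singleton_of_lt l x (by omega), getD_append_singleton_of_lt l x (by omega),
          getD_append_singleton_of_lt l x hj] at hP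
        exact .inl ⟨⟨by omega, hj⟩, hij, hP⟩
      · rintro (⟨-, hij, hP⟩ | ⟨k, -, -, rfl⟩)
        · rw [getD_append_singleton_of_lt l x (by omega),
            getD_append_singleton_of_lt l x (by omega), getD_append_singleton_of_lt l x hj]
          exact ⟨⟨by omega, by omega⟩, hij, hP⟩
        · omega
    · constructor
      · rintro ⟨⟨-, hjL⟩, hij, hP⟩
        obtain rfl : j = l.length := by omega
        rw [getD_append_singleton_of_lt l x (by omega), getD_append_singleton_of_lt l x (by omega),
          getD_append_singleton_length] at hP
        exact .inr ⟨i, ⟨by omega, hP⟩, rfl, rfl⟩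
      · rintro (⟨⟨-, hjL⟩, -⟩ | ⟨k, ⟨hk, hP⟩, rfl, rfl⟩)
        · omega
        · rw [getD_append_singleton_of_lt l x (by omega),
            getD_append_singleton_of_lt l x (by omega), getD_append_singleton_length]
          exact ⟨⟨by omega, by omega⟩, by omega, hP⟩
  · rw [disjoint_left]
    rintro ⟨i, j⟩ hfst hsnd
    simp only [mem_filter, mem_product, mem_range, mem_image, Prod.mk.injEq] at hfst hsnd
    omega

theorem desSet_append_singleton_of_forall_le (l : List ℕ) (x : ℕ) (hx : ∀ a ∈ l, a ≤ x) :
    desSet (l ++ [x]) = desSet l := by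
  ext i
  simp only [desSet, Finset.mem_filter, Finset.mem_range, List.length_append,
    List.length_singleton, Nat.add_sub_cancel]
  constructor
  · rintro ⟨hi, hdes⟩
    rw [getD_append_singleton_of_lt l x hi] at hdes
    rcases lt_or_ge (i + 1) l.length with hi' | hi'
    · rw [getD_append_singleton_of_lt l x hi'] at hdes
      exact ⟨by omega, hdes⟩
    · rw [show i + 1 = l.length by omega, getD_append_singleton_length] at hdes
      exact absurd (hx _ (getD_mem l hi)) (not_le.2 hdes)
  · rintro ⟨hi, hdes⟩
    rw [getD_append_singleton_of_lt l x (by omega), getD_append_singleton_of_lt l x (by omega)]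
    exact ⟨by omega, hdes⟩

theorem acb_append_singleton_of_forall_le (l : List ℕ) (x : ℕ) (hx : ∀ a ∈ l, a ≤ x) :
    acb (l ++ [x]) = acb l := by
  rw [acb_eq_adjPatternCount, acb_eq_adjPatternCount, adjPatternCount_append_singleton,
    Finset.filter_false_of_mem, Finset.card_empty, add_zero]
  intro i hi h
  exact absurd h.2 (not_lt.2 (hx _ (getD_mem l (by have := Finset.mem_range.1 hi; omega))))

theorem cba_append_singleton_of_forall_le (l : List ℕ) (x : ℕ) (hx : ∀ a ∈ l, a ≤ x) :
    cba (l ++ [x]) = cba l := by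
  rw [cba_eq_adjPatternCount, cba_eq_adjPatternCount, adjPatternCount_append_singleton,
    Finset.filter_false_of_mem, Finset.card_empty, add_zero]
  intro i hi h
  exact absurd h.1 (not_lt.2 (hx _ (getD_mem l (by have := Finset.mem_range.1 hi; omega))))

theorem bac_append_singleton_of_forall_lt (l : List ℕ) (x : ℕ) (hx : ∀ a ∈ l, a < x) :
    bac (l ++ [x]) = bac l + des l := by
  rw [bac_eq_adjPatternCount, bac_eq_adjPatternCount, adjPatternCount_append_singleton, des,
    desSet]
  congr 2
  refine Finset.filter_congr fun i hi => and_iff_left (hx _ (getD_mem l ?_))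
  have := Finset.mem_range.1 hi
  omega

end BS

theorem stat_append_last_general (n : ℕ) (σ : List ℕ)
    (hσ : BS.isPerm σ (n - 1)) :
    BS.stat (σ ++ [n]) = BS.stat σ + BS.des σ := by
  have hlt : ∀ a ∈ σ, a < n := by
    intro a ha
    obtain ⟨k, hk, rfl⟩ := List.mem_map.1 (hσ.mem_iff.1 ha)
    have := List.mem_range.1 hk
    omega
  have hle : ∀ a ∈ σ, a ≤ n := fun a ha => (hlt a ha).le
  simp only [BS.stat, BS.des, BS.acb_append_singleton_of_forall_le σ n hle,
    BS.cba_append_singleton_of_forall_le σ n hle, BS.bac_append_singleton_of_forall_lt σ n hlt,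
    BS.desSet_append_singleton_of_forall_le σ n hle]
  omega

/-- appending `n` at the end adds des(σ) to stat. -/
theorem stat_append_last (n : ℕ) (σ : List ℕ)
    (hn : 1 ≤ n) (hσ : BS.isPerm σ (n - 1)) :
    BS.stat (σ ++ [n]) = BS.stat σ + BS.des σ :=
  stat_append_last_general n σ hσ
end

section
/- If σ ∈ S_{n-1} and τ is obtained by inserting n into the k-th descent (from left to right) of σ, then stat(τ) = stat(σ) + k - 1. -/
/-!
Write `σ = L ++ a :: b :: R` with `b < a`, so that `τ = L ++ a :: n :: b :: R`. An occurrence of a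
pattern `xy-z` in `τ` either avoids `n` (and is one in `σ`, apart from those on the pair `ab`, which
is no longer adjacent), or uses `n` as `z`, or sits on one of the new pairs `an`, `nb`. As `n` is the
largest letter, `(ac-b)` gains the letters of `R` above `a`; `(ba-c)` loses exactly these but gains
one occurrence `xy-n` for each descent `xy` of `L ++ [a]`; `(cb-a)` trades the occurrences `ab-z`
for `nb-z`; and the descent `ab` becomes the descent `nb`.
-/

namespace BS

open Finset

variable {α : Type*}

/-- Occurrences of the dashed pattern `xy-z` whose letters satisfy `P x y z`. -/
def patCount (P : α → α → α → Prop) [∀ x y z, Decidable (P x y z)] : List α → ℕ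
  | x :: y :: r => r.countP (fun z => P x y z) + patCount P (y :: r)
  | _ => 0

def adjPairs (l : List α) : List (α × α) := l.zip l.tail

@[simp] theorem adjPairs_nil : adjPairs ([] : List α) = [] := rfl

@[simp] theorem adjPairs_singleton (x : α) : adjPairs [x] = [] := rfl

@[simp] theorem adjPairs_cons_cons (x y : α) (r : List α) :
    adjPairs (x :: y :: r) = (x, y) :: adjPairs (y :: r) := rfl

theorem adjPairs_append_cons (l m : List α) (x : α) :
    adjPairs (l ++ x :: m) = adjPairs (l ++ [x]) ++ adjPairs (x :: m) := by
  induction l with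
  | nil => simp
  | cons y l ih => cases l <;> simp_all

theorem mem_of_mem_adjPairs {l : List α} {p : α × α} (h : p ∈ adjPairs l) : p.1 ∈ l ∧ p.2 ∈ l :=
  ⟨List.of_mem_zip h |>.1, List.mem_of_mem_tail (List.of_mem_zip h).2⟩

theorem countP_eq_sum_range_getD (f : α → Prop) [DecidablePred f] (d : α) (r : List α) :
    r.countP (fun z => f z) = ∑ i ∈ range r.length, if f (r.getD i d) then 1 else 0 := by
  induction r with
  | nil => simp
  | cons x r ih =>
    rw [List.countP_cons, ih, List.length_cons, sum_range_succ']
    simp only [List.getD_cons_succ, List.getD_cons_zero, decide_eq_true_eq]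

theorem card_filter_range_eq_countP_adjPairs (Q : α → α → Prop) [DecidableRel Q] (d : α)
    (l : List α) :
    ((range (l.length - 1)).filter (fun i => Q (l.getD i d) (l.getD (i + 1) d))).card =
      (adjPairs l).countP (fun p => Q p.1 p.2) := by
  rw [card_filter]
  induction l with
  | nil => simp
  | cons x m ih =>
    cases m with
    | nil => simp
    | cons y r =>
      simp only [List.length_cons, Nat.add_sub_cancel] at ih ⊢
      rw [sum_range_succ', adjPairs_cons_cons, List.countP_cons, ← ih]
      simp

theorem sum_range_pattern_eq_patCount (P : α → α → α → Prop) [∀ x y z, Decidable (P x y z)]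
    (d : α) (l : List α) :
    (∑ p ∈ range l.length, ∑ q ∈ range l.length,
      if p + 2 ≤ q ∧ P (l.getD p d) (l.getD (p + 1) d) (l.getD q d) then 1 else 0) =
      patCount P l := by
  induction l with
  | nil => simp [patCount]
  | cons x m ih =>
    have hshift : ∀ p q : ℕ, p + 1 + 2 ≤ q + 1 ↔ p + 2 ≤ q := by omega
    have hzero : ∀ p : ℕ, ¬ p + 2 ≤ 0 := by omega
    simp only [List.length_cons, sum_range_succ', List.getD_cons_succ, List.getD_cons_zero,
      hshift, hzero, false_and, if_false, add_zero, ih]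
    cases m with
    | nil => simp [patCount]
    | cons y r =>
      simp only [patCount, List.length_cons, sum_range_succ', List.getD_cons_succ,
        List.getD_cons_zero, countP_eq_sum_range_getD _ d, le_add_self, true_and,
        show ¬ 0 + 2 ≤ 0 + 1 by omega, false_and, if_false, add_zero]
      exact add_comm _ _

theorem patCount_append_insert (P : α → α → α → Prop) [∀ x y z, Decidable (P x y z)]
    (L R : List α) (a v b : α) :
    patCount P (L ++ a :: v :: b :: R) + R.countP (fun z => P a b z) =
      patCount P (L ++ a :: b :: R) + (adjPairs (L ++ [a])).countP (fun p => P p.1 p.2 v) +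
        (b :: R).countP (fun z => P a v z) + R.countP (fun z => P v b z) := by
  induction L with
  | nil => simp [patCount, List.countP_cons]; omega
  | cons x L ih => cases L <;> simp_all [patCount, List.countP_cons] <;> omega

theorem insertIdx_append_cons_length (L M : List α) (a v : α) :
    (L ++ a :: M).insertIdx (L.length + 1) v = L ++ a :: v :: M := by
  induction L with
  | nil => simp
  | cons x L ih => simpa [List.insertIdx_succ_cons]

theorem acb_eq_patCount (l : List ℕ) : acb l = patCount (fun x y z => x < z ∧ z < y) l := by
  rw [acb, card_filter, sum_product, ← sum_range_pattern_eq_patCount _ 0]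

theorem bac_eq_patCount (l : List ℕ) : bac l = patCount (fun x y z => y < x ∧ x < z) l := by
  rw [bac, card_filter, sum_product, ← sum_range_pattern_eq_patCount _ 0]

theorem cba_eq_patCount (l : List ℕ) : cba l = patCount (fun x y z => z < y ∧ y < x) l := by
  rw [cba, card_filter, sum_product, ← sum_range_pattern_eq_patCount _ 0]

theorem des_eq_countP_adjPairs (l : List ℕ) : des l = (adjPairs l).countP (fun p => p.2 < p.1) :=
  card_filter_range_eq_countP_adjPairs (fun x y => y < x) 0 l

theorem exists_eq_append_of_mem_desSet {σ : List ℕ} {j : ℕ} (hj : j ∈ desSet σ) :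
    ∃ L a b R, σ = L ++ a :: b :: R ∧ L.length = j ∧ b < a := by
  obtain ⟨hjσ, hdesc⟩ := by simpa [desSet] using hj
  have hj₁ : j + 1 < σ.length := by omega
  refine ⟨σ.take j, σ[j], σ[j + 1], σ.drop (j + 2), ?_, by simp; omega, ?_⟩
  · rw [← List.drop_eq_getElem_cons, ← List.drop_eq_getElem_cons, List.take_append_drop]
  · simpa [List.getElem?_eq_getElem hj₁, List.getElem?_eq_getElem (Nat.lt_of_succ_lt hj₁)]
      using hdesc

section Insertion

variable {L R : List ℕ} {a b v : ℕ}

theorem des_append_insert (hba : b < a) (hav : a < v) :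
    des (L ++ a :: v :: b :: R) = des (L ++ a :: b :: R) := by
  rw [des_eq_countP_adjPairs, des_eq_countP_adjPairs, adjPairs_append_cons,
    adjPairs_append_cons L (b :: R)]
  simp [hba, hba.trans hav, hav.not_gt]

theorem acb_append_insert (hba : b < a) (hLa : ∀ z ∈ L ++ [a], z < v) (hR : ∀ z ∈ R, z < v) :
    acb (L ++ a :: v :: b :: R) = acb (L ++ a :: b :: R) + R.countP (fun z => a < z) := by
  have hav : a < v := hLa a (by simp)
  have key := patCount_append_insert (fun x y z => x < z ∧ z < y) L R a v b
  have h₁ : R.countP (fun z => a < z ∧ z < b) = 0 :=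
    List.countP_eq_zero.2 fun z _ => by simp; omega
  have h₂ : (adjPairs (L ++ [a])).countP (fun p => p.1 < v ∧ v < p.2) = 0 :=
    List.countP_eq_zero.2 fun p hp => by have := hLa _ (mem_of_mem_adjPairs hp).2; simp; omega
  have h₃ : (b :: R).countP (fun z => a < z ∧ z < v) = R.countP (fun z => a < z) := by
    rw [List.countP_cons, if_neg (by simp; omega), add_zero]
    exact List.countP_congr fun z hz => by have := hR z hz; simp; omega
  have h₄ : R.countP (fun z => v < z ∧ z < b) = 0 :=
    List.countP_eq_zero.2 fun z _ => by simp; omega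
  rw [acb_eq_patCount, acb_eq_patCount, ← h₃]
  simp only [h₁, h₂, h₄] at key
  omega

theorem bac_append_insert (hba : b < a) (hLa : ∀ z ∈ L ++ [a], z < v) (hR : ∀ z ∈ R, z < v) :
    bac (L ++ a :: v :: b :: R) + R.countP (fun z => a < z) =
      bac (L ++ a :: b :: R) + des (L ++ [a]) := by
  have hav : a < v := hLa a (by simp)
  have key := patCount_append_insert (fun x y z => y < x ∧ x < z) L R a v b
  have h₁ : R.countP (fun z => b < a ∧ a < z) = R.countP (fun z => a < z) :=
    List.countP_congr fun z _ => by simp [hba]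
  have h₂ : (adjPairs (L ++ [a])).countP (fun p => p.2 < p.1 ∧ p.1 < v) =
      (adjPairs (L ++ [a])).countP (fun p => p.2 < p.1) :=
    List.countP_congr fun p hp => by have := hLa _ (mem_of_mem_adjPairs hp).1; simp; omega
  have h₃ : (b :: R).countP (fun z => v < a ∧ a < z) = 0 :=
    List.countP_eq_zero.2 fun z _ => by simp; omega
  have h₄ : R.countP (fun z => b < v ∧ v < z) = 0 :=
    List.countP_eq_zero.2 fun z hz => by have := hR z hz; simp; omega
  rw [bac_eq_patCount, bac_eq_patCount, des_eq_countP_adjPairs, ← h₁, ← h₂]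
  simp only [h₃, h₄] at key
  omega

theorem cba_append_insert (hba : b < a) (hLa : ∀ z ∈ L ++ [a], z < v) :
    cba (L ++ a :: v :: b :: R) = cba (L ++ a :: b :: R) := by
  have hav : a < v := hLa a (by simp)
  have key := patCount_append_insert (fun x y z => z < y ∧ y < x) L R a v b
  have h₁ : R.countP (fun z => z < b ∧ b < a) = R.countP (fun z => z < b ∧ b < v) :=
    List.countP_congr fun z _ => by simp; omega
  have h₂ : (adjPairs (L ++ [a])).countP (fun p => v < p.2 ∧ p.2 < p.1) = 0 :=
    List.countP_eq_zero.2 fun p hp => by have := hLa _ (mem_of_mem_adjPairs hp).2; simp; omega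
  have h₃ : (b :: R).countP (fun z => z < v ∧ v < a) = 0 :=
    List.countP_eq_zero.2 fun z _ => by simp; omega
  rw [cba_eq_patCount, cba_eq_patCount]
  simp only [h₁, h₂, h₃] at key
  omega

theorem stat_append_insert (hba : b < a) (hv : ∀ z ∈ L ++ a :: b :: R, z < v) :
    stat (L ++ a :: v :: b :: R) = stat (L ++ a :: b :: R) + des (L ++ [a]) := by
  have hLa : ∀ z ∈ L ++ [a], z < v := fun z hz => hv z (by simp at hz ⊢; tauto)
  have hR : ∀ z ∈ R, z < v := fun z hz => hv z (by simp [hz])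
  have hacb := acb_append_insert hba hLa hR
  have hbac := bac_append_insert hba hLa hR
  have hcba := cba_append_insert (R := R) hba hLa
  have hdes := des_append_insert (L := L) (R := R) hba (hLa a (by simp))
  simp only [stat]
  omega

theorem card_filter_desSet_lt_length :
    ((desSet (L ++ a :: b :: R)).filter (· < L.length)).card = des (L ++ [a]) := by
  rw [show L ++ a :: b :: R = (L ++ [a]) ++ b :: R by simp, des, desSet, desSet, filter_filter]
  have hl : (L ++ [a]).length = L.length + 1 := by simp
  generalize L ++ [a] = l at hl ⊢
  congr 1
  ext i
  simp only [mem_filter, mem_range, List.length_append, List.length_cons, hl]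
  by_cases hi : i < L.length
  · rw [List.getD_append l _ _ i (by omega), List.getD_append l _ _ (i + 1) (by omega)]
    omega
  · omega

end Insertion

end BS

theorem stat_insert_descent_general (n : ℕ) (σ : List ℕ) (j k : ℕ)
    (hσ : BS.isPerm σ (n - 1)) (hj : j ∈ BS.desSet σ)
    (hk : k = ((BS.desSet σ).filter (· < j)).card + 1) :
    BS.stat (σ.insertIdx (j + 1) n) = BS.stat σ + (k - 1) := by
  obtain ⟨L, a, b, R, rfl, rfl, hba⟩ := BS.exists_eq_append_of_mem_desSet hj
  have hv : ∀ z ∈ L ++ a :: b :: R, z < n := fun z hz => by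
    obtain ⟨y, hy, rfl⟩ := List.mem_map.1 (hσ.subset hz)
    simp only [List.mem_range] at hy
    omega
  rw [hk, BS.card_filter_desSet_lt_length, BS.insertIdx_append_cons_length,
    BS.stat_append_insert hba hv, Nat.add_sub_cancel]

/-- inserting `n` into the k-th descent (from the left) of σ adds
`k - 1` to stat.  Here the descent is between the (0-indexed) positions `j` and
`j + 1`, so `n` is inserted at list index `j + 1`, and `k - 1` is the number of
descents strictly to the left. -/
theorem stat_insert_descent (n : ℕ) (σ : List ℕ) (j k : ℕ)
    (hn : 1 ≤ n) (hσ : BS.isPerm σ (n - 1)) (hj : j ∈ BS.desSet σ)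
    (hk : k = ((BS.desSet σ).filter (· < j)).card + 1) :
    BS.stat (σ.insertIdx (j + 1) n) = BS.stat σ + (k - 1) :=
  stat_insert_descent_general n σ j k hσ hj hk
end
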